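/- arXiv:1510.01891 — 14 statements merged into one kernel-verified Lean document; each statement's English description precedes it below -/
import Mathlib

section
/- Let n ≥ 1 and let w : P(N) → ℝ be any real vector indexed by subsets of N = {1,...,n}. Then M_{n−1}(w) = Z · D · Zᵀ + w_N^N · 𝕁, where Z is the zeta matrix of P_{n−1}(N) (Z_{I,J} = 1 iff I ⊆ J), D is the diagonal matrix indexed by P_{n−1}(N) with (I,I)-entry w_I^N, and 𝕁 is the all-ones matrix indexed by P_{n−1}(N). -/
open Finset Matrix

/-- `w_I^N := ∑_{H ⊆ N \ I} (-1)^{|H|} w_{H ∪ I}`. -/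
def mob {n : ℕ} (w : Finset (Fin n) → ℝ) (I : Finset (Fin n)) : ℝ :=
  ∑ H ∈ (Finset.univ \ I).powerset, (-1 : ℝ) ^ H.card * w (H ∪ I)

/-- The index set `P_{n-1}(N)`: all subsets of `N = {1,...,n}` except `N` itself. -/
abbrev Idx (n : ℕ) := {I : Finset (Fin n) // I ≠ Finset.univ}

/-- The `(n-1)`-moment matrix of `w`, with `(I,J)`-entry `w_{I ∪ J}`. -/
def Mnm1 {n : ℕ} (w : Finset (Fin n) → ℝ) : Matrix (Idx n) (Idx n) ℝ :=
  Matrix.of fun I J => w (I.1 ∪ J.1)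

lemma neg_one_pow_sum {α : Type*} [DecidableEq α] (x : Finset α) :
    ∑ m ∈ x.powerset, (-1 : ℝ) ^ m.card = if x = ∅ then 1 else 0 := by
  have h := Finset.sum_powerset_neg_one_pow_card (x := x)
  have : ((∑ m ∈ x.powerset, (-1 : ℤ) ^ m.card : ℤ) : ℝ) = ((if x = ∅ then 1 else 0 : ℤ) : ℝ) := by
    exact_mod_cast congrArg (Int.cast : ℤ → ℝ) h
  simpa using this

lemma key {n : ℕ} (w : Finset (Fin n) → ℝ) (S : Finset (Fin n)) :
    ∑ K ∈ Finset.univ.powerset.filter (fun K => S ⊆ K), mob w K = w S := by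
  classical
  simp only [mob]
  rw [Finset.sum_sigma']
  have := Finset.sum_nbij'
    (s := (Finset.univ.powerset.filter (fun K => S ⊆ K)).sigma
      (fun K => (Finset.univ \ K).powerset))
    (t := (Finset.univ.powerset.filter (fun L => S ⊆ L)).sigma
      (fun L => (L \ S).powerset))
    (f := fun p => (-1 : ℝ) ^ p.2.card * w (p.2 ∪ p.1))
    (g := fun q => (-1 : ℝ) ^ q.2.card * w q.1)
    (fun p => ⟨p.1 ∪ p.2, p.2⟩) (fun q => ⟨q.1 \ q.2, q.2⟩)
    ?_ ?_ ?_ ?_ ?_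
  · rw [this, Finset.sum_sigma]
    have : ∀ L ∈ Finset.univ.powerset.filter (fun L => S ⊆ L),
        ∑ H ∈ (L \ S).powerset, (-1 : ℝ) ^ H.card * w L
          = (if L = S then 1 else 0) * w L := by
      intro L hL
      simp only [mem_filter, mem_powerset] at hL
      rw [← Finset.sum_mul, neg_one_pow_sum]
      refine congrArg (· * w L) (if_congr ?_ rfl rfl)
      rw [Finset.sdiff_eq_empty_iff_subset]
      exact ⟨fun h => subset_antisymm h hL.2, fun h => h.le⟩
    rw [Finset.sum_congr rfl this]
    simp [Finset.sum_ite_eq', Finset.mem_filter]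
  · rintro ⟨K, H⟩ hp
    simp only [mem_sigma, mem_filter, mem_powerset, Finset.subset_sdiff] at hp ⊢
    obtain ⟨⟨-, hSK⟩, -, hdisj⟩ := hp
    exact ⟨⟨Finset.subset_univ _, hSK.trans subset_union_left⟩, subset_union_right,
      hdisj.mono_right hSK⟩
  · rintro ⟨L, H⟩ hq
    simp only [mem_sigma, mem_filter, mem_powerset, Finset.subset_sdiff] at hq ⊢
    obtain ⟨⟨-, hSL⟩, hHL, hHS⟩ := hq
    refine ⟨⟨Finset.subset_univ _, ?_⟩, Finset.subset_univ _, Finset.sdiff_disjoint.symm⟩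
    exact ⟨hSL, hHS.symm⟩
  · rintro ⟨K, H⟩ hp
    simp only [mem_sigma, mem_filter, mem_powerset, Finset.subset_sdiff] at hp
    have hdisj : Disjoint H K := hp.2.2
    simp [Finset.union_sdiff_cancel_right hdisj.symm]
  · rintro ⟨L, H⟩ hq
    simp only [mem_sigma, mem_filter, mem_powerset] at hq
    simp [Finset.sdiff_union_of_subset (hq.2.trans Finset.sdiff_subset)]
  · rintro ⟨K, H⟩ hp
    simp only [mem_sigma, mem_filter, mem_powerset, Finset.subset_sdiff] at hp
    have hdisj : Disjoint H K := hp.2.2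
    simp [Finset.union_comm]

/-- `M_{n-1}(w) = Z · D · Zᵀ + w_N^N · 𝕁` where `Z` is the zeta matrix of `P_{n-1}(N)`,
`D` is the diagonal matrix of the values `w_I^N`, and `𝕁` is the all-ones matrix. -/
theorem moment_eq_zeta_diag_zeta_add_ones (n : ℕ) (hn : 1 ≤ n)
    (w : Finset (Fin n) → ℝ)
    (Z : Matrix (Idx n) (Idx n) ℝ)
    (hZ : ∀ I J : Idx n, Z I J = if I.1 ⊆ J.1 then 1 else 0) :
    Mnm1 w =
      Z * Matrix.diagonal (fun I : Idx n => mob w I.1) * Zᵀ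
        + mob w Finset.univ • Matrix.of (fun (_ : Idx n) (_ : Idx n) => (1 : ℝ)) := by
  classical
  ext I J
  set g : Finset (Fin n) → ℝ :=
    fun K => (if I.1 ⊆ K then 1 else 0) * mob w K * (if J.1 ⊆ K then 1 else 0) with hg
  show w (I.1 ∪ J.1) = _
  have entry : (Z * Matrix.diagonal
      (fun K : {I : Finset (Fin n) // I ≠ Finset.univ} => mob w K.1) * Zᵀ) I J
      = ∑ K : {I : Finset (Fin n) // I ≠ Finset.univ}, g K.1 := by
    rw [Matrix.mul_apply]
    refine Finset.sum_congr rfl fun K _ => ?_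
    rw [Matrix.mul_diagonal, Matrix.transpose_apply, hZ, hZ, hg]
  rw [Matrix.add_apply, entry, Matrix.smul_apply, Matrix.of_apply, smul_eq_mul, mul_one]
  have h1 : ∑ K : {I : Finset (Fin n) // I ≠ Finset.univ}, g K.1
      = ∑ K ∈ Finset.univ.powerset.filter (fun K => K ≠ Finset.univ), g K :=
    (Finset.sum_subtype _ (by simp) g).symm
  have h2 : ∑ K ∈ Finset.univ.powerset.filter (fun K => ¬ K ≠ Finset.univ), g K
      = mob w Finset.univ := by
    have : Finset.univ.powerset.filter (fun K : Finset (Fin n) => ¬ K ≠ Finset.univ)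
        = {Finset.univ} := by
      ext K; simp
    rw [this, Finset.sum_singleton, hg]
    simp
  have h3 : ∑ K ∈ Finset.univ.powerset, g K = w (I.1 ∪ J.1) := by
    have : ∀ K : Finset (Fin n), g K = if I.1 ∪ J.1 ⊆ K then mob w K else 0 := by
      intro K
      rw [hg]
      by_cases hI : I.1 ⊆ K <;> by_cases hJ : J.1 ⊆ K <;>
        simp [hI, hJ, Finset.union_subset_iff]
    rw [Finset.sum_congr rfl fun K _ => this K, ← Finset.sum_filter, key]
  rw [h1, ← h3, ← Finset.sum_filter_add_sum_filter_not Finset.univ.powerset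
    (fun K => K ≠ Finset.univ) g, h2]
end

section
/- Let n ≥ 1 and let w : P(N) → ℝ be any real vector indexed by subsets of N = {1,...,n}. Then the moment matrix M_{n−1}(w) is congruent to the matrix D + w_N^N · v vᵀ, where D is the diagonal matrix indexed by P_{n−1}(N) with (I,I)-entry w_I^N, and v is the vector indexed by P_{n−1}(N) with entries v_I = (−1)^{n+1−|I|}. In particular, M_{n−1}(w) is positive semidefinite if and only if D + w_N^N · v vᵀ is positive semidefinite. -/
/-! With `ζ` the zeta matrix of inclusion on `P_{n-1}(N)`, Möbius inversion on the Boolean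
lattice gives `w_S = ∑_{K ⊇ S} w_K^N`, so `M_{n-1}(w) = ζ D ζᵀ + w_N^N 𝟙𝟙ᵀ`, the last term
collecting `K = N`. For `I ≠ N` the alternating sum `∑_{K ⊇ I} (-1)^{n+1-|K|}` over all of `P(N)`
vanishes, so `ζ v = 𝟙` and `𝟙𝟙ᵀ = ζ v vᵀ ζᵀ`. Finally `ζ` is unitriangular with respect to any
linear extension of inclusion, hence invertible. -/

open Finset Matrix

namespace Matrix

variable {ι R : Type*}

variable (ι R) in
def zetaMatrix [Preorder ι] [DecidableLE ι] [Zero R] [One R] : Matrix ι ι R :=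
  of fun i j => if i ≤ j then 1 else 0

theorem det_zetaMatrix [Fintype ι] [DecidableEq ι] [PartialOrder ι] [DecidableLE ι]
    [CommRing R] : (zetaMatrix ι R).det = 1 := by
  have hb : (zetaMatrix ι R).BlockTriangular toLinearExtension := fun i j hji =>
    if_neg fun hij => (hji.trans_le (toLinearExtension.monotone hij)).false
  rw [hb.det]
  refine prod_eq_one fun a _ => ?_
  have : Subsingleton {i // toLinearExtension i = a} :=
    ⟨fun i j => Subtype.ext (i.2.trans j.2.symm)⟩
  convert det_one (R := R) (n := {i // toLinearExtension i = a})
  ext i j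
  obtain rfl := Subsingleton.elim i j
  simp [toSquareBlock, toSquareBlockProp, zetaMatrix]

theorem zetaMatrix_mul_diagonal_mul_transpose_apply [Fintype ι] [DecidableEq ι] [Preorder ι]
    [DecidableLE ι] [CommRing R] (d : ι → R) (i j : ι) :
    (zetaMatrix ι R * diagonal d * (zetaMatrix ι R)ᵀ) i j =
      ∑ k, if i ≤ k ∧ j ≤ k then d k else 0 := by
  rw [mul_apply]
  refine sum_congr rfl fun k _ => ?_
  simp only [mul_diagonal, transpose_apply, zetaMatrix, of_apply]
  by_cases hi : i ≤ k <;> by_cases hj : j ≤ k <;> simp [hi, hj]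

end Matrix

namespace Finset

variable {α R : Type*} [DecidableEq α] [Ring R]

theorem sum_Icc_neg_one_pow_card_sdiff (S T : Finset α) :
    ∑ K ∈ Icc S T, (-1 : R) ^ #(T \ K) = if S = T then 1 else 0 := by
  by_cases hST : S ⊆ T
  · have hsum : ∑ K ∈ Icc S T, (-1 : R) ^ #(T \ K) = ∑ H ∈ (T \ S).powerset, (-1 : R) ^ #H := by
      refine sum_nbij' (T \ ·) (T \ ·) ?_ ?_ ?_ ?_ fun _ _ => rfl
      · intro K hK
        exact mem_powerset.2 (sdiff_subset_sdiff le_rfl (mem_Icc.1 hK).1)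
      · intro H hH
        exact mem_Icc.2 ⟨subset_sdiff.2 ⟨hST, disjoint_sdiff.mono_right (mem_powerset.1 hH)⟩,
          sdiff_subset⟩
      · intro K hK
        exact sdiff_sdiff_eq_self (mem_Icc.1 hK).2
      · intro H hH
        exact sdiff_sdiff_eq_self ((mem_powerset.1 hH).trans sdiff_subset)
    have hpow := congrArg (Int.cast : ℤ → R) (sum_powerset_neg_one_pow_card (x := T \ S))
    push_cast at hpow
    rw [hsum, hpow]
    exact if_congr (sdiff_eq_empty_iff_subset.trans ⟨hST.antisymm, fun h => h ▸ subset_rfl⟩) rfl rfl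
  · rw [Icc_eq_empty hST, sum_empty, if_neg fun h => hST h.le]

theorem sum_Ici_neg_one_pow_card_compl [Fintype α] (S : Finset α) :
    ∑ K ∈ Ici S, (-1 : R) ^ #Kᶜ = if S = univ then 1 else 0 := by
  simp_rw [compl_eq_univ_sdiff]
  exact sum_Icc_neg_one_pow_card_sdiff S univ

end Finset

section Moebius

variable {n : ℕ}

theorem mob_eq_sum_Ici (w : Finset (Fin n) → ℝ) (I : Finset (Fin n)) :
    mob w I = ∑ T ∈ Ici I, (-1 : ℝ) ^ #(T \ I) * w T := by
  have hcancel : ∀ H ∈ (univ \ I).powerset, (H ∪ I) \ I = H := fun H hH =>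
    union_sdiff_cancel_right (disjoint_sdiff_self_left.mono_left (mem_powerset.1 hH))
  refine sum_nbij' (· ∪ I) (· \ I) (fun _ _ => mem_Ici.2 subset_union_right)
    (fun T _ => mem_powerset.2 (sdiff_subset_sdiff (subset_univ T) le_rfl)) hcancel
    (fun T hT => sdiff_union_of_subset (mem_Ici.1 hT)) fun H hH => ?_
  rw [hcancel H hH]

theorem sum_Ici_mob (w : Finset (Fin n) → ℝ) (S : Finset (Fin n)) :
    ∑ K ∈ Ici S, mob w K = w S := by
  simp_rw [mob_eq_sum_Ici]
  rw [sum_comm' (t' := Ici S) (s' := fun T => Icc S T) fun K T => by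
    simp only [mem_Ici, mem_Icc]
    exact ⟨fun h => ⟨h, h.1.trans h.2⟩, And.left⟩]
  simp_rw [← sum_mul, sum_Icc_neg_one_pow_card_sdiff, ite_mul, one_mul, zero_mul]
  simp

theorem sum_Idx {M : Type*} [AddCommGroup M] (f : Finset (Fin n) → M) :
    ∑ K : Idx n, f K = ∑ K, f K - f univ := by
  rw [Fintype.sum_eq_add_sum_subtype_ne f univ, add_sub_cancel_left]

theorem sum_Idx_ite_mob (w : Finset (Fin n) → ℝ) (S : Finset (Fin n)) :
    ∑ K : Idx n, (if S ⊆ K.1 then mob w K else 0) = w S - mob w univ := by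
  rw [sum_Idx (fun K => if S ⊆ K then mob w K else 0), ← sum_filter, filter_le_eq_Ici,
    sum_Ici_mob, if_pos (subset_univ S)]

theorem sum_Idx_ite_neg_one_pow (I : Idx n) :
    ∑ K : Idx n, (if I ≤ K then (-1 : ℝ) ^ (n + 1 - #K.1) else 0) = 1 := by
  have hsign : ∀ K : Finset (Fin n), (-1 : ℝ) ^ (n + 1 - #K) = -(-1) ^ #Kᶜ := fun K => by
    rw [card_compl, Fintype.card_fin, Nat.sub_add_comm (by simpa using card_le_univ K), pow_succ,
      mul_neg_one]
  simp_rw [← Subtype.coe_le_coe]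
  rw [sum_Idx (fun K => if I.1 ⊆ K then (-1 : ℝ) ^ (n + 1 - #K) else 0), ← sum_filter,
    filter_le_eq_Ici]
  simp [hsign, sum_neg_distrib, sum_Ici_neg_one_pow_card_compl, I.2]

theorem Mnm1_eq_zetaMatrix_mul_mul_transpose (w : Finset (Fin n) → ℝ) (v : Idx n → ℝ)
    (hv : ∀ I : Idx n, v I = (-1 : ℝ) ^ (n + 1 - #I.1)) :
    Mnm1 w = zetaMatrix (Idx n) ℝ *
      (diagonal (fun I : Idx n => mob w I.1) + mob w univ • vecMulVec v v) *
        (zetaMatrix (Idx n) ℝ)ᵀ := by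
  have hZv : zetaMatrix (Idx n) ℝ *ᵥ v = 1 := funext fun I => by
    simpa [mulVec, dotProduct, zetaMatrix, hv] using sum_Idx_ite_neg_one_pow I
  rw [mul_add, add_mul, Matrix.mul_smul, Matrix.smul_mul, mul_vecMulVec, vecMulVec_mul,
    vecMul_transpose, hZv]
  ext I J
  rw [Matrix.add_apply, zetaMatrix_mul_diagonal_mul_transpose_apply, Matrix.smul_apply]
  simp only [← Subtype.coe_le_coe, ← union_subset_iff]
  rw [sum_Idx_ite_mob]
  simp [Mnm1]

end Moebius

theorem moment_congruent_almost_diagonal_general (n : ℕ)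
    (w : Finset (Fin n) → ℝ)
    (v : Idx n → ℝ) (hv : ∀ I : Idx n, v I = (-1 : ℝ) ^ (n + 1 - I.1.card))
    (A : Matrix (Idx n) (Idx n) ℝ)
    (hA : A = Matrix.diagonal (fun I : Idx n => mob w I.1)
        + mob w Finset.univ • Matrix.vecMulVec v v) :
    (∃ P : Matrix (Idx n) (Idx n) ℝ, IsUnit P ∧ Mnm1 w = Pᵀ * A * P) ∧
      ((Mnm1 w).PosSemidef ↔ A.PosSemidef) := by
  have hP : IsUnit (zetaMatrix (Idx n) ℝ)ᵀ := by
    rw [isUnit_iff_isUnit_det, det_transpose, det_zetaMatrix]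
    exact isUnit_one
  have hM : Mnm1 w = star (zetaMatrix (Idx n) ℝ)ᵀ * A * (zetaMatrix (Idx n) ℝ)ᵀ := by
    rw [star_eq_conjTranspose, conjTranspose_eq_transpose_of_trivial, transpose_transpose, hA]
    exact Mnm1_eq_zetaMatrix_mul_mul_transpose w v hv
  exact ⟨⟨_, hP, hM⟩, hM ▸ hP.posSemidef_star_left_conjugate_iff⟩

/-- `M_{n-1}(w)` is congruent to `D + w_N^N · v vᵀ` where `D` is the diagonal matrix of the
values `w_I^N` and `v_I = (-1)^{n+1-|I|}`; in particular one is PSD iff the other is. -/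
theorem moment_congruent_almost_diagonal (n : ℕ) (hn : 1 ≤ n)
    (w : Finset (Fin n) → ℝ)
    (v : Idx n → ℝ) (hv : ∀ I : Idx n, v I = (-1 : ℝ) ^ (n + 1 - I.1.card))
    (A : Matrix (Idx n) (Idx n) ℝ)
    (hA : A = Matrix.diagonal (fun I : Idx n => mob w I.1)
        + mob w Finset.univ • Matrix.vecMulVec v v) :
    (∃ P : Matrix (Idx n) (Idx n) ℝ, IsUnit P ∧ Mnm1 w = Pᵀ * A * P) ∧
      ((Mnm1 w).PosSemidef ↔ A.PosSemidef) :=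
  moment_congruent_almost_diagonal_general n w v hv A hA
end

section
/- Let n ≥ 1, let w : P(N) → ℝ with w_N^N ≠ 0, let D be the diagonal matrix indexed by P_{n−1}(N) with entries w_I^N and let v be the vector indexed by P_{n−1}(N) with v_I = (−1)^{n+1−|I|}. For any I ⊆ N with I ≠ N, the number λ = w_I^N is an eigenvalue of the matrix D + w_N^N · v vᵀ if and only if there exists J ⊆ N with J ≠ N, J ≠ I and w_J^N = w_I^N. -/
open Finset Matrix

lemma mulVec_formula {m : Type*} [Fintype m] [DecidableEq m] (d : m → ℝ) (c : ℝ)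
    (v x : m → ℝ) (K : m) :
    ((Matrix.diagonal d + c • Matrix.vecMulVec v v) *ᵥ x) K
      = d K * x K + c * (v K * ∑ j, v j * x j) := by
  simp [Matrix.mulVec, dotProduct, Matrix.add_apply, Matrix.smul_apply,
    Matrix.vecMulVec_apply, add_mul, Finset.sum_add_distrib, Matrix.diagonal_apply,
    ite_mul, Finset.mul_sum, mul_assoc]

/-- If `w_N^N ≠ 0` then, for `I ≠ N`, the number `λ = w_I^N` is an eigenvalue of
`D + w_N^N · v vᵀ` iff there is another `J ≠ N`, `J ≠ I`, with `w_J^N = w_I^N`. -/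
theorem diagonal_value_eigenvalue_iff_repeated (n : ℕ) (hn : 1 ≤ n)
    (w : Finset (Fin n) → ℝ) (hw : mob w Finset.univ ≠ 0)
    (v : Idx n → ℝ) (hv : ∀ I : Idx n, v I = (-1 : ℝ) ^ (n + 1 - I.1.card))
    (I0 : Finset (Fin n)) (hI0 : I0 ≠ Finset.univ) :
    (∃ x : Idx n → ℝ, x ≠ 0 ∧
        (Matrix.diagonal (fun I : Idx n => mob w I.1)
            + mob w Finset.univ • Matrix.vecMulVec v v) *ᵥ x = mob w I0 • x)
      ↔ ∃ J : Finset (Fin n), J ≠ Finset.univ ∧ J ≠ I0 ∧ mob w J = mob w I0 := by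
  have hvne : ∀ K : Idx n, v K ≠ 0 := by
    intro K
    rw [hv K]
    positivity
  set I0' : Idx n := ⟨I0, hI0⟩ with hI0'
  constructor
  · rintro ⟨x, hx0, hx⟩
    by_contra hno
    push_neg at hno
    have hno' : ∀ K : Idx n, K ≠ I0' → mob w K.1 ≠ mob w I0 := by
      intro K hK
      exact hno K.1 K.2 (fun h => hK (Subtype.ext h))
    have key : ∀ K : Idx n,
        mob w K.1 * x K + mob w Finset.univ * (v K * ∑ j, v j * x j)
          = mob w I0 * x K := by
      intro K
      have := congrFun hx K
      rwa [mulVec_formula] at this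
    have hs : (∑ j, v j * x j) = 0 := by
      have h0 := key I0'
      have : mob w Finset.univ * (v I0' * ∑ j, v j * x j) = 0 := by
        have : mob w I0'.1 = mob w I0 := rfl
        nlinarith [key I0']
      rcases mul_eq_zero.mp this with h | h
      · exact absurd h hw
      · rcases mul_eq_zero.mp h with h | h
        · exact absurd h (hvne I0')
        · exact h
    have hzero : ∀ K : Idx n, K ≠ I0' → x K = 0 := by
      intro K hK
      have h := key K
      rw [hs, mul_zero, mul_zero, add_zero] at h
      have := hno' K hK
      by_contra hxK
      exact this (mul_right_cancel₀ hxK h)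
    have hxI0 : x I0' = 0 := by
      have : (∑ j, v j * x j) = v I0' * x I0' := by
        rw [Finset.sum_eq_single I0']
        · intro b _ hb
          rw [hzero b hb, mul_zero]
        · intro h; exact absurd (Finset.mem_univ _) h
      rw [this] at hs
      rcases mul_eq_zero.mp hs with h | h
      · exact absurd h (hvne I0')
      · exact h
    apply hx0
    funext K
    by_cases hK : K = I0'
    · rw [hK]; exact hxI0
    · exact hzero K hK
  · rintro ⟨J, hJu, hJI, hJeq⟩
    set J' : Idx n := ⟨J, hJu⟩ with hJ'
    have hne : I0' ≠ J' := fun h => hJI (congrArg Subtype.val h).symm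
    refine ⟨fun K => if K = I0' then v J' else if K = J' then -(v I0') else 0, ?_, ?_⟩
    · intro h
      have := congrFun h J'
      simp [hne.symm] at this
      exact hvne I0' this
    · have hs : (∑ j, v j * (if j = I0' then v J' else if j = J' then -(v I0') else 0)) = 0 := by
        have heach : ∀ j : Idx n,
            v j * (if j = I0' then v J' else if j = J' then -(v I0') else 0)
              = (if j = I0' then v I0' * v J' else 0) + (if j = J' then v J' * (-(v I0')) else 0) := by
          intro j
          by_cases h1 : j = I0'
          · subst h1; simp [hne]
          · by_cases h2 : j = J'
            · subst h2; rw [if_neg h1, if_pos rfl, if_neg h1, if_pos rfl]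
              ring
            · simp [h1, h2]
        rw [Finset.sum_congr rfl (fun j _ => heach j), Finset.sum_add_distrib,
          Finset.sum_ite_eq' Finset.univ I0', Finset.sum_ite_eq' Finset.univ J']
        simp; ring
      funext K
      rw [mulVec_formula, hs, mul_zero, mul_zero, add_zero, Pi.smul_apply, smul_eq_mul]
      by_cases h1 : K = I0'
      · rw [h1]
      · by_cases h2 : K = J'
        · subst h2
          rw [if_neg (fun h => hne h.symm), if_pos rfl]
          show mob w J * _ = _
          rw [hJeq]
        · simp [h1, h2]
end

section
/- Let n ≥ 1, let w : P(N) → ℝ, let D be the diagonal matrix indexed by P_{n−1}(N) with entries w_I^N and let v be the vector indexed by P_{n−1}(N) with v_I = (−1)^{n+1−|I|}. The matrix D + w_N^N · v vᵀ is positive semidefinite if and only if either w_I^N ≥ 0 for all I ⊆ N, or the following three conditions all hold: w_K^N < 0 for exactly one subset K ⊆ N; w_J^N > 0 for all J ⊆ N with J ≠ K; and Σ_{I ⊆ N} 1/w_I^N ≤ 0. -/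
/-!
Writing `z_I = v_I x_I` for `I ≠ N` and `z_N = -∑_{I ≠ N} z_I` (note `v_I ^ 2 = 1`), the quadratic
form of `D + w_N^N v vᵀ` at `x` becomes `∑_{I ⊆ N} w_I^N z_I ^ 2`, and every `z` with `∑ z = 0`
arises this way. So the matrix is positive semidefinite iff the diagonal form `∑ d_i z_i ^ 2`
is nonnegative on the hyperplane `∑ z_i = 0`. If some `d_k < 0`, testing `e_k - e_j` forces
`d_j > 0` for `j ≠ k`, and testing `(1 / d_i)_i - σ e_k` with `σ = ∑ 1 / d_i` gives
`σ (d_k σ - 1) ≥ 0`, i.e. `σ ≤ 0`. Conversely Cauchy–Schwarz gives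
`z_k ^ 2 ≤ (∑_{i ≠ k} d_i z_i ^ 2)(∑_{i ≠ k} 1 / d_i)`, which `σ ≤ 0` turns into nonnegativity.
-/

open Finset Matrix

section SumZeroHyperplane

variable {ι : Type*} [Fintype ι]

def DiagFormNonnegOnSumZero (d : ι → ℝ) : Prop :=
  ∀ x : ι → ℝ, ∑ i, x i = 0 → 0 ≤ ∑ i, d i * x i ^ 2

namespace DiagFormNonnegOnSumZero

variable [DecidableEq ι] {d : ι → ℝ} {k : ι}

theorem pos_of_ne (h : DiagFormNonnegOnSumZero d) (hk : d k < 0) {j : ι} (hj : j ≠ k) :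
    0 < d j := by
  have hQ := h (Pi.single k 1 - Pi.single j 1) (by simp [sum_sub_distrib])
  rw [Fintype.sum_eq_add k j hj.symm fun i hi => by simp [hi.1, hi.2]] at hQ
  simp only [Pi.sub_apply, Pi.single_eq_same, Pi.single_eq_of_ne hj, Pi.single_eq_of_ne hj.symm,
    sub_zero, zero_sub, even_two, Even.neg_pow, one_pow, mul_one] at hQ
  linarith

theorem sum_one_div_nonpos (h : DiagFormNonnegOnSumZero d) (hk : d k < 0) :
    ∑ i, 1 / d i ≤ 0 := by
  set σ := ∑ i, 1 / d i
  have hd : ∀ i, d i ≠ 0 := fun i => by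
    rcases eq_or_ne i k with rfl | hi
    · exact hk.ne
    · exact (h.pos_of_ne hk hi).ne'
  set e : ι → ℝ := Pi.single k σ
  have hQ := h (fun i => 1 / d i - e i) (by simp [e, sum_sub_distrib, σ])
  have hval : ∑ i, d i * (1 / d i - e i) ^ 2 = σ * (d k * σ - 1) := by
    have hpt : ∀ i, d i * (1 / d i - e i) ^ 2 = 1 / d i - 2 * e i + d i * e i ^ 2 :=
      fun i => by field_simp [hd i]; ring
    have hsq : ∑ i, d i * e i ^ 2 = d k * σ ^ 2 :=
      (Fintype.sum_eq_single k fun i hi => by simp [e, hi]).trans (by simp [e])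
    simp only [hpt, sum_add_distrib, sum_sub_distrib, ← mul_sum, e, Finset.sum_pi_single', hsq,
      mem_univ, if_true]
    ring
  rw [hval] at hQ
  by_contra! hσ
  exact hQ.not_gt (mul_neg_of_pos_of_neg hσ (by nlinarith))

end DiagFormNonnegOnSumZero

theorem diagFormNonnegOnSumZero_of_nonneg {d : ι → ℝ} (hd : ∀ i, 0 ≤ d i) :
    DiagFormNonnegOnSumZero d :=
  fun _ _ => sum_nonneg fun i _ => mul_nonneg (hd i) (sq_nonneg _)

theorem diagFormNonnegOnSumZero_of_neg [DecidableEq ι] {d : ι → ℝ} {k : ι} (hk : d k < 0)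
    (hpos : ∀ j, j ≠ k → 0 < d j) (hsum : ∑ i, 1 / d i ≤ 0) : DiagFormNonnegOnSumZero d := by
  intro x hx
  set S := ∑ i : {i // i ≠ k}, d i * x i ^ 2
  set T := ∑ i : {i // i ≠ k}, 1 / d i
  have hpos' : ∀ i : {i // i ≠ k}, 0 < d i := fun i => hpos i i.2
  have hS : 0 ≤ S := sum_nonneg fun i _ => mul_nonneg (hpos' i).le (sq_nonneg _)
  have hxk : x k = -∑ i : {i // i ≠ k}, x i := by
    rw [Fintype.sum_eq_add_sum_subtype_ne _ k] at hx; linarith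
  have hCS : x k ^ 2 ≤ S * T := by
    rw [hxk, neg_sq]
    refine sum_sq_le_sum_mul_sum_of_sq_le_mul _ (fun i _ => mul_nonneg (hpos' i).le (sq_nonneg _))
      (fun i _ => (one_div_pos.2 (hpos' i)).le) fun i _ => ?_
    exact le_of_eq (by field_simp [(hpos' i).ne'])
  have hT : 0 ≤ 1 + d k * T := by
    rw [Fintype.sum_eq_add_sum_subtype_ne _ k] at hsum
    have := mul_nonneg_of_nonpos_of_nonpos hk.le hsum
    rwa [mul_add, mul_one_div_cancel hk.ne] at this
  rw [Fintype.sum_eq_add_sum_subtype_ne _ k]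
  nlinarith [mul_nonneg hS hT, mul_le_mul_of_nonpos_left hCS hk.le]

theorem diagFormNonnegOnSumZero_iff [DecidableEq ι] {d : ι → ℝ} :
    DiagFormNonnegOnSumZero d ↔
      (∀ i, 0 ≤ d i) ∨ ∃ k, d k < 0 ∧ (∀ j, j ≠ k → 0 < d j) ∧ ∑ i, 1 / d i ≤ 0 := by
  refine ⟨fun h => ?_, ?_⟩
  · by_cases hd : ∀ i, 0 ≤ d i
    · exact .inl hd
    obtain ⟨k, hk⟩ := not_forall.1 hd
    have hk : d k < 0 := not_le.1 hk
    exact .inr ⟨k, hk, fun j hj => h.pos_of_ne hk hj, h.sum_one_div_nonpos hk⟩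
  · rintro (hd | ⟨k, hk, hpos, hsum⟩)
    · exact diagFormNonnegOnSumZero_of_nonneg hd
    · exact diagFormNonnegOnSumZero_of_neg hk hpos hsum

section Compression

variable [DecidableEq ι] (d : ι → ℝ) {k : ι} {u : {i // i ≠ k} → ℝ}

theorem sum_mul_sq_add_mul_dotProduct_sq_of_sum_eq_zero (hu : ∀ i, u i ^ 2 = 1) {z : ι → ℝ}
    (hz : ∑ i, z i = 0) :
    ∑ i : {i // i ≠ k}, d i * (u i * z i) ^ 2 + d k * (u ⬝ᵥ fun i => u i * z i) ^ 2
      = ∑ i, d i * z i ^ 2 := by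
  have hzk : u ⬝ᵥ (fun i => u i * z i) = -z k := by
    rw [Fintype.sum_eq_add_sum_subtype_ne _ k] at hz
    simp only [dotProduct, ← mul_assoc, ← sq, hu, one_mul]
    linarith
  rw [hzk, Fintype.sum_eq_add_sum_subtype_ne _ k, neg_sq, add_comm]
  simp only [mul_pow, hu, one_mul]

theorem forall_nonneg_add_mul_dotProduct_sq_iff (hu : ∀ i, u i ^ 2 = 1) :
    (∀ x : {i // i ≠ k} → ℝ, 0 ≤ ∑ i : {i // i ≠ k}, d i * x i ^ 2 + d k * (u ⬝ᵥ x) ^ 2) ↔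
      DiagFormNonnegOnSumZero d := by
  refine ⟨fun h z hz => ?_, fun h x => ?_⟩
  · rw [← sum_mul_sq_add_mul_dotProduct_sq_of_sum_eq_zero d hu hz]
    exact h _
  · set z : ι → ℝ := fun i => if hi : i = k then -(u ⬝ᵥ x) else u ⟨i, hi⟩ * x ⟨i, hi⟩
    have hzi (i : {i // i ≠ k}) : z i = u i * x i := dif_neg i.2
    have hzk : z k = -(u ⬝ᵥ x) := dif_pos rfl
    have hz : ∑ i, z i = 0 := by
      simp only [Fintype.sum_eq_add_sum_subtype_ne _ k, hzk, hzi, dotProduct, neg_add_cancel]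
    have hx : (fun i : {i // i ≠ k} => u i * z i) = x := by
      ext i
      rw [hzi, ← mul_assoc, ← sq, hu, one_mul]
    rw [← hx, sum_mul_sq_add_mul_dotProduct_sq_of_sum_eq_zero d hu hz]
    exact h z hz

end Compression

end SumZeroHyperplane

theorem posSemidef_diagonal_add_smul_vecMulVec_iff {m : Type*} [Fintype m] [DecidableEq m]
    (d : m → ℝ) (c : ℝ) (v : m → ℝ) :
    (diagonal d + c • vecMulVec v v).PosSemidef ↔
      ∀ x, 0 ≤ ∑ i, d i * x i ^ 2 + c * (v ⬝ᵥ x) ^ 2 := by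
  have hvv : (vecMulVec v v).IsHermitian := by simp [IsHermitian]
  have hform : ∀ x, x ⬝ᵥ ((diagonal d + c • vecMulVec v v) *ᵥ x)
      = ∑ i, d i * x i ^ 2 + c * (v ⬝ᵥ x) ^ 2 := fun x => by
    simp only [add_mulVec, smul_mulVec, vecMulVec_mulVec, dotProduct_add, dotProduct_smul]
    congr 1
    · simp only [dotProduct, mulVec_diagonal]
      exact sum_congr rfl fun i _ => by ring
    · rw [dotProduct_comm x v, op_smul_eq_mul, smul_eq_mul]
      ring
  simp only [posSemidef_iff_dotProduct_mulVec, star_trivial, hform,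
    and_iff_right ((isHermitian_diagonal d).add (hvv.smul (IsSelfAdjoint.all c)))]

theorem posSemidef_almost_diagonal_iff_general (n : ℕ)
    (w : Finset (Fin n) → ℝ)
    (v : Idx n → ℝ) (hv : ∀ I : Idx n, v I = (-1 : ℝ) ^ (n + 1 - I.1.card)) :
    (Matrix.diagonal (fun I : Idx n => mob w I.1)
        + mob w Finset.univ • Matrix.vecMulVec v v).PosSemidef
      ↔ ((∀ I : Finset (Fin n), 0 ≤ mob w I) ∨
          (∃ K : Finset (Fin n), mob w K < 0 ∧
            (∀ J : Finset (Fin n), J ≠ K → 0 < mob w J) ∧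
            ∑ I : Finset (Fin n), 1 / mob w I ≤ 0)) := by
  have hv_sq (I : Idx n) : v I ^ 2 = 1 := by
    rw [hv, ← pow_mul, pow_mul', neg_one_sq, one_pow]
  rw [posSemidef_diagonal_add_smul_vecMulVec_iff]
  exact (forall_nonneg_add_mul_dotProduct_sq_iff (mob w) hv_sq).trans diagFormNonnegOnSumZero_iff

/-- `D + w_N^N · v vᵀ` is PSD iff either all `w_I^N ≥ 0`, or there is exactly one `K` with
`w_K^N < 0`, all other `w_J^N > 0`, and `∑_{I ⊆ N} 1/w_I^N ≤ 0`. -/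
theorem posSemidef_almost_diagonal_iff (n : ℕ) (hn : 1 ≤ n)
    (w : Finset (Fin n) → ℝ)
    (v : Idx n → ℝ) (hv : ∀ I : Idx n, v I = (-1 : ℝ) ^ (n + 1 - I.1.card)) :
    (Matrix.diagonal (fun I : Idx n => mob w I.1)
        + mob w Finset.univ • Matrix.vecMulVec v v).PosSemidef
      ↔ ((∀ I : Finset (Fin n), 0 ≤ mob w I) ∨
          (∃ K : Finset (Fin n), mob w K < 0 ∧
            (∀ J : Finset (Fin n), J ≠ K → 0 < mob w J) ∧
            ∑ I : Finset (Fin n), 1 / mob w I ≤ 0)) :=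
  posSemidef_almost_diagonal_iff_general n w v hv
end

section
/- Let ℙ be the 0/1 integer linear program min{ f(x) : x ∈ {0,1}^n, g_ℓ(x) ≥ 0 for ℓ ∈ [m] } with m ≥ 1 linear constraints, where f and each g_ℓ are affine-linear functions of x, every constraint is non-redundant (for each ℓ there exists a point of {0,1}^n violating g_ℓ(x) ≥ 0), and there exists at least one integral feasible point; let f(x_{I*}) denote the minimum of f over integral feasible points. Then the Lasserre relaxation Las_{n−1}(ℙ) has an integrality gap (i.e., there exists a feasible y with Σ_{I⊆N} f_I y_I < f(x_{I*})) if and only if there exists a family of reals {y_I^N : I ⊆ N} satisfying all of: (i) y_I^N > 0 for all I ⊆ N; (ii) Σ_{I⊆N} y_I^N = 1; (iii) for each ℓ ∈ [m] there is exactly one K_ℓ ⊆ N with g_ℓ(x_{K_ℓ}) y_{K_ℓ}^N < 0; (iv) for each ℓ ∈ [m] and every J ⊆ N with J ≠ K_ℓ, g_ℓ(x_J) y_J^N > 0; (v) Σ_{I⊆N} 1/(g_ℓ(x_I) y_I^N) ≤ 0 for all ℓ ∈ [m]; and (vi) Σ_{I⊆N} y_I^N f(x_I) < f(x_{I*}).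 -/
/-!
Write the moment vector as `y_I = ∑_{J ⊇ I} Y_J` with `Y = y^N`. The quadratic form of a moment
matrix of such a vector is `∑_H Y_H (∑_{I ⊆ H} x_I)²`, so `M_n(y) ⪰ 0` iff `Y ≥ 0`; the shifted
matrix `M_{n-1}(g∗y)` is the moment matrix of `g·Y` with the row and column `N` removed, and it is
positive semidefinite iff the diagonal form `∑_H g(x_H) Y_H t_H²` is nonnegative on the hyperplane
`∑_H t_H = 0`. On that hyperplane a diagonal form `∑ v_H t_H²` with a negative entry `v_K` is
nonnegative iff all other entries are positive and `∑ 1 / v_H ≤ 0` (Cauchy–Schwarz one way, the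
test vector `t = v⁻¹ - (∑ v⁻¹) δ_K` the other), because any two entries of a form that is
nonnegative on the hyperplane have nonnegative sum. A gap forces positive mass on an infeasible
point, which gives such a negative entry, hence `Y > 0`, and then every non-redundant constraint
has exactly one negative entry.
-/

open Finset Matrix

/-- Value of the affine-linear function `x ↦ ∑ i, a i * x i + b` at the 0/1 point `x_I`. -/
def gval {n : ℕ} (a : Fin n → ℝ) (b : ℝ) (I : Finset (Fin n)) : ℝ :=
  (∑ i ∈ I, a i) + b

/-- The shift operator: `(g∗y)_I = ∑ i, a i * y_{I ∪ {i}} + b * y_I`. -/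
def shiftVec {n : ℕ} (a : Fin n → ℝ) (b : ℝ) (y : Finset (Fin n) → ℝ)
    (I : Finset (Fin n)) : ℝ :=
  (∑ i : Fin n, a i * y (insert i I)) + b * y I

/-- The full `n`-moment matrix of `w`, indexed by all subsets of `N`. -/
def Mfull {n : ℕ} (w : Finset (Fin n) → ℝ) : Matrix (Finset (Fin n)) (Finset (Fin n)) ℝ :=
  Matrix.of fun I J => w (I ∪ J)

section SumZeroHyperplane

variable {ι : Type*} [Fintype ι] {v : ι → ℝ} {k : ι}

def NonnegOnSumZero (v : ι → ℝ) : Prop :=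
  ∀ t : ι → ℝ, ∑ i, t i = 0 → 0 ≤ ∑ i, v i * t i ^ 2

theorem NonnegOnSumZero.add_nonneg (h : NonnegOnSumZero v) {i j : ι} (hij : i ≠ j) :
    0 ≤ v i + v j := by
  classical
  have key := h (Pi.single i 1 - Pi.single j 1) (by simp [sum_sub_distrib])
  rw [Fintype.sum_eq_add_sum_compl i, sum_eq_single_of_mem j (by simpa using hij.symm)] at key
  · simpa [hij, hij.symm] using key
  · intro l hl hlj
    simp_all

theorem NonnegOnSumZero.pos_of_ne (h : NonnegOnSumZero v) (hk : v k < 0) {j : ι} (hj : j ≠ k) :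
    0 < v j := by
  linarith [h.add_nonneg hj]

theorem NonnegOnSumZero.sum_inv_nonpos (h : NonnegOnSumZero v) (hk : v k < 0) :
    ∑ i, (v i)⁻¹ ≤ 0 := by
  classical
  have hv : ∀ i, v i ≠ 0 := fun i => by
    rcases eq_or_ne i k with rfl | hi
    · exact hk.ne
    · exact (h.pos_of_ne hk hi).ne'
  set S := ∑ i, (v i)⁻¹
  -- the test vector `v⁻¹ - S δ_k` has value `S * (S * v k - 1)`
  have key := h (fun i => (v i)⁻¹ - if i = k then S else 0) (by simp [sum_sub_distrib, S])
  have expand : ∀ i, v i * ((v i)⁻¹ - if i = k then S else 0) ^ 2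
      = (v i)⁻¹ - 2 * (if i = k then S else 0) + if i = k then S ^ 2 * v k else 0 := by
    intro i
    have := hv i
    split_ifs with hi
    · subst hi; field_simp; ring
    · field_simp; ring
  simp only [expand, sum_add_distrib, sum_sub_distrib, ← mul_sum, sum_ite_eq', mem_univ,
    if_true] at key
  nlinarith

theorem nonnegOnSumZero_of_sum_inv_nonpos (hk : v k < 0) (hpos : ∀ j ≠ k, 0 < v j)
    (hsum : ∑ i, (v i)⁻¹ ≤ 0) : NonnegOnSumZero v := by
  classical
  intro t ht
  rw [Fintype.sum_eq_add_sum_compl k] at ht hsum ⊢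
  have hpos' : ∀ j ∈ ({k}ᶜ : Finset ι), 0 < v j := fun j hj => hpos j (by simpa using hj)
  have hcs : (∑ j ∈ {k}ᶜ, t j) ^ 2 ≤ (∑ j ∈ {k}ᶜ, (v j)⁻¹) * ∑ j ∈ {k}ᶜ, v j * t j ^ 2 :=
    sum_sq_le_sum_mul_sum_of_sq_le_mul _ (fun j hj => (inv_pos.2 (hpos' j hj)).le)
      (fun j hj => mul_nonneg (hpos' j hj).le (sq_nonneg _))
      (fun j hj => by rw [← mul_assoc, inv_mul_cancel₀ (hpos' j hj).ne', one_mul])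
  have hQ : 0 ≤ ∑ j ∈ {k}ᶜ, v j * t j ^ 2 :=
    sum_nonneg fun j hj => mul_nonneg (hpos' j hj).le (sq_nonneg _)
  have htk : t k = -∑ j ∈ {k}ᶜ, t j := by linarith
  have hinv : v k * (v k)⁻¹ = 1 := mul_inv_cancel₀ hk.ne
  rw [htk, neg_sq]
  nlinarith [mul_le_mul_of_nonneg_right (show ∑ j ∈ {k}ᶜ, (v j)⁻¹ ≤ -(v k)⁻¹ by linarith) hQ]

end SumZeroHyperplane

theorem exists_pos_lt_of_sum_mul_lt {ι : Type*} [Fintype ι] {Y f : ι → ℝ} {m : ℝ}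
    (hY : ∀ i, 0 ≤ Y i) (h1 : ∑ i, Y i = 1) (h : ∑ i, Y i * f i < m) :
    ∃ i, 0 < Y i ∧ f i < m := by
  have hlt : ∑ i, Y i * f i < ∑ i, Y i * m := by rwa [← sum_mul, h1, one_mul]
  obtain ⟨i, -, hi⟩ := exists_lt_of_sum_lt hlt
  exact ⟨i, (hY i).lt_of_ne (by rintro h0; simp [← h0] at hi), lt_of_mul_lt_mul_left hi (hY i)⟩

section BooleanLattice

variable {α : Type*} [DecidableEq α]

theorem sum_Icc_neg_one_pow (K T : Finset α) :
    ∑ I ∈ Icc K T, (-1 : ℝ) ^ #I = if K = T then (-1) ^ #K else 0 := by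
  by_cases hKT : K ⊆ T
  · have hdisj : ∀ D ∈ (T \ K).powerset, Disjoint K D := fun D hD =>
      disjoint_of_subset_right (mem_powerset.1 hD) disjoint_sdiff
    have hcard : ∀ D ∈ (T \ K).powerset, (-1 : ℝ) ^ #(K ∪ D) = (-1) ^ #K * (-1) ^ #D :=
      fun D hD => by rw [card_union_of_disjoint (hdisj D hD), pow_add]
    have halt := congrArg (Int.cast : ℤ → ℝ) (sum_powerset_neg_one_pow_card (x := T \ K))
    push_cast at halt
    rw [Icc_eq_image_powerset hKT, sum_image, sum_congr rfl hcard, ← mul_sum]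
    · simp only [halt, sdiff_eq_empty_iff_subset]
      by_cases h : K = T
      · simp [h]
      · simp [h, (hKT.ssubset_of_ne h).not_subset]
    · intro D hD D' hD' h
      rw [← union_sdiff_cancel_left (hdisj D hD), ← union_sdiff_cancel_left (hdisj D' hD')]
      exact congrArg (· \ K) h
  · rw [Icc_eq_empty (fun h => hKT h), if_neg (fun h => hKT h.le)]
    simp

variable [Fintype α]

def zetaBelow (x : Finset α → ℝ) (H : Finset α) : ℝ :=
  ∑ I with I ⊆ H, x I

def moebiusBelow (s : Finset α → ℝ) (H : Finset α) : ℝ :=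
  ∑ I with I ⊆ H, (-1) ^ (#H + #I) * s I

theorem moebiusBelow_univ (s : Finset α → ℝ) :
    moebiusBelow s univ = (-1) ^ Fintype.card α * ∑ I, (-1) ^ #I * s I := by
  simp [moebiusBelow, pow_add, mul_sum, mul_assoc]

theorem zetaBelow_moebiusBelow (s : Finset α → ℝ) : zetaBelow (moebiusBelow s) = s := by
  funext H
  calc zetaBelow (moebiusBelow s) H
      = ∑ I with I ⊆ H, ∑ J with J ⊆ I, (-1) ^ #I * ((-1) ^ #J * s J) := by
        simp only [zetaBelow, moebiusBelow, pow_add, mul_assoc]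
    _ = ∑ J with J ⊆ H, (∑ I ∈ Icc J H, (-1 : ℝ) ^ #I) * ((-1) ^ #J * s J) := by
        simp_rw [sum_mul]
        refine sum_comm' fun I J => ?_
        simp only [mem_filter, mem_univ, true_and, mem_Icc]
        exact ⟨fun h => ⟨⟨h.2, h.1⟩, h.2.trans h.1⟩, fun h => ⟨h.1.2, h.1.1⟩⟩
    _ = s H := by
        simp only [sum_Icc_neg_one_pow, ite_mul, zero_mul, sum_ite_eq', mem_filter, mem_univ,
          subset_refl, and_self, if_true, ← mul_assoc, ← pow_add, ← two_mul, pow_mul, neg_one_sq,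
          one_pow, one_mul]

theorem sum_neg_one_pow_supsets (I : Finset α) :
    ∑ H with I ⊆ H, (-1 : ℝ) ^ #H = if I = univ then (-1) ^ Fintype.card α else 0 := by
  have : ({H | I ⊆ H} : Finset (Finset α)) = Icc I univ := by ext; simp
  rw [this, sum_Icc_neg_one_pow]
  split_ifs with h <;> simp [h]

theorem sum_subtype_ne_univ (g : Finset α → ℝ) (hg : g univ = 0) :
    ∑ I : {I : Finset α // I ≠ univ}, g I = ∑ I, g I :=
  (sum_subtype (univ.erase univ) (by simp) g).symm.trans (sum_erase univ hg)

/-- With `Y = y^N`, `zetaAbove Y` is the moment vector `y`. -/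
def zetaAbove (Y : Finset α → ℝ) (I : Finset α) : ℝ :=
  ∑ J with I ⊆ J, Y J

theorem zetaAbove_eq_zetaBelow_compl (Y : Finset α → ℝ) (I : Finset α) :
    zetaAbove Y I = zetaBelow (fun J => Y Jᶜ) Iᶜ := by
  refine sum_nbij' (·ᶜ) (·ᶜ) ?_ ?_ ?_ ?_ ?_ <;> simp [subset_compl_comm]

theorem exists_zetaAbove_eq (y : Finset α → ℝ) : ∃ Y, zetaAbove Y = y :=
  ⟨fun J => moebiusBelow (fun I => y Iᶜ) Jᶜ, funext fun I => by
    simp [zetaAbove_eq_zetaBelow_compl, zetaBelow_moebiusBelow]⟩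

theorem zetaAbove_empty (Y : Finset α → ℝ) : zetaAbove Y ∅ = ∑ J, Y J := by
  simp [zetaAbove]

end BooleanLattice

section MomentMatrix

variable {α ι : Type*} [DecidableEq α]

def momentMatrix (e : ι → Finset α) (w : Finset α → ℝ) : Matrix ι ι ℝ :=
  Matrix.of fun i j => w (e i ∪ e j)

theorem momentMatrix_isHermitian (e : ι → Finset α) (w : Finset α → ℝ) :
    (momentMatrix e w).IsHermitian := by
  ext i j
  simp [momentMatrix, union_comm]

variable [Fintype α] [Fintype ι]

theorem dotProduct_momentMatrix_zetaAbove (e : ι → Finset α) (W : Finset α → ℝ) (x : ι → ℝ) :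
    x ⬝ᵥ momentMatrix e (zetaAbove W) *ᵥ x = ∑ H, W H * (∑ i with e i ⊆ H, x i) ^ 2 := by
  have h : ∀ i j, x i * (zetaAbove W (e i ∪ e j) * x j)
      = ∑ H, W H * ((if e i ⊆ H then x i else 0) * (if e j ⊆ H then x j else 0)) := by
    intro i j
    simp only [zetaAbove, sum_filter, union_subset_iff, ite_and, mul_sum, sum_mul]
    refine sum_congr rfl fun H _ => ?_
    split_ifs <;> ring
  simp only [dotProduct, mulVec, momentMatrix, of_apply, mul_sum, h, sq, sum_filter, sum_mul]
  conv_lhs => enter [2, i]; rw [sum_comm]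
  rw [sum_comm]
  exact sum_congr rfl fun H _ => sum_comm

theorem posSemidef_momentMatrix_zetaAbove_iff (e : ι → Finset α) (W : Finset α → ℝ) :
    (momentMatrix e (zetaAbove W)).PosSemidef ↔
      ∀ x : ι → ℝ, 0 ≤ ∑ H, W H * (∑ i with e i ⊆ H, x i) ^ 2 := by
  simp only [posSemidef_iff_dotProduct_mulVec, momentMatrix_isHermitian, true_and, star_trivial,
    dotProduct_momentMatrix_zetaAbove]

end MomentMatrix

section Lasserre

variable {n : ℕ}

theorem posSemidef_Mfull_zetaAbove_iff (W : Finset (Fin n) → ℝ) :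
    (Mfull (zetaAbove W)).PosSemidef ↔ ∀ H, 0 ≤ W H := by
  refine (posSemidef_momentMatrix_zetaAbove_iff id W).trans ⟨fun h H => ?_, fun h x => ?_⟩
  · have hδ := zetaBelow_moebiusBelow (Pi.single H 1 : Finset (Fin n) → ℝ)
    simp only [funext_iff, zetaBelow] at hδ
    simpa [hδ, Pi.single_apply] using h (moebiusBelow (Pi.single H 1))
  · exact sum_nonneg fun H _ => mul_nonneg (h H) (sq_nonneg _)

/-- Removing the index `univ` restricts the test vectors `zetaBelow x` to the hyperplane
`∑ (-1) ^ #H * s H = 0`; the signs are absorbed by `t H = (-1) ^ #H * s H`. -/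
theorem posSemidef_Mnm1_zetaAbove_iff (W : Finset (Fin n) → ℝ) :
    (Mnm1 (zetaAbove W)).PosSemidef ↔ NonnegOnSumZero W := by
  refine (posSemidef_momentMatrix_zetaAbove_iff Subtype.val W).trans
    ⟨fun h t ht => ?_, fun h x => ?_⟩
  · set s : Finset (Fin n) → ℝ := fun H => (-1) ^ #H * t H
    have hs_univ : moebiusBelow s univ = 0 := by
      simp [moebiusBelow_univ, s, ← mul_assoc, ← pow_add, ← two_mul, pow_mul, ht]
    have hx : ∀ H, ∑ I : Idx n with I.1 ⊆ H, moebiusBelow s I = s H := fun H => by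
      rw [sum_filter, sum_subtype_ne_univ (fun I => if I ⊆ H then moebiusBelow s I else 0)
        (by simp [hs_univ]), ← sum_filter]
      exact congrFun (zetaBelow_moebiusBelow s) H
    simpa [hx, s, mul_pow, ← pow_mul] using h fun I => moebiusBelow s I
  · set s : Finset (Fin n) → ℝ := fun H => ∑ I : Idx n with I.1 ⊆ H, x I
    have hsum : ∑ H, (-1) ^ #H * s H = 0 := by
      simp only [s, mul_sum, sum_filter]
      rw [sum_comm]
      refine sum_eq_zero fun I _ => ?_
      simp [← sum_filter, ← sum_mul, sum_neg_one_pow_supsets, I.2]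
    simpa [mul_pow, ← pow_mul] using h (fun H => (-1) ^ #H * s H) hsum

theorem shiftVec_zetaAbove (a : Fin n → ℝ) (b : ℝ) (Y : Finset (Fin n) → ℝ) :
    shiftVec a b (zetaAbove Y) = zetaAbove (fun J => gval a b J * Y J) := by
  funext I
  simp only [shiftVec, zetaAbove, gval, sum_filter, insert_subset_iff, ite_and, mul_sum]
  rw [sum_comm, ← sum_add_distrib]
  refine sum_congr rfl fun J _ => ?_
  split_ifs with hIJ
  · simp [add_mul, sum_mul]
  · simp

theorem objective_zetaAbove (c : Fin n → ℝ) (c0 : ℝ) (Y : Finset (Fin n) → ℝ) :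
    c0 * zetaAbove Y ∅ + ∑ i, c i * zetaAbove Y {i} = ∑ I, Y I * gval c c0 I := by
  calc _ = shiftVec c c0 (zetaAbove Y) ∅ := by simp [shiftVec, add_comm]
    _ = _ := by simp [shiftVec_zetaAbove, zetaAbove_empty, mul_comm]

end Lasserre

theorem lasserre_level_pred_gap_iff_general (n m : ℕ)
    (c : Fin n → ℝ) (c0 : ℝ)
    (a : Fin m → Fin n → ℝ) (b : Fin m → ℝ)
    (hnonred : ∀ ℓ : Fin m, ∃ I : Finset (Fin n), gval (a ℓ) (b ℓ) I < 0)
    (Istar : Finset (Fin n))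
    (hIstar_opt : ∀ I : Finset (Fin n), (∀ ℓ : Fin m, 0 ≤ gval (a ℓ) (b ℓ) I) →
      gval c c0 Istar ≤ gval c c0 I) :
    (∃ y : Finset (Fin n) → ℝ,
        y ∅ = 1 ∧
        (Mfull y).PosSemidef ∧
        (∀ ℓ : Fin m, (Mnm1 (shiftVec (a ℓ) (b ℓ) y)).PosSemidef) ∧
        c0 * y ∅ + (∑ i : Fin n, c i * y {i}) < gval c c0 Istar)
      ↔ (∃ Y : Finset (Fin n) → ℝ,
          (∀ I : Finset (Fin n), 0 < Y I) ∧
          (∑ I : Finset (Fin n), Y I = 1) ∧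
          (∀ ℓ : Fin m, ∃ K : Finset (Fin n),
            gval (a ℓ) (b ℓ) K * Y K < 0 ∧
            ∀ J : Finset (Fin n), J ≠ K → 0 < gval (a ℓ) (b ℓ) J * Y J) ∧
          (∀ ℓ : Fin m, ∑ I : Finset (Fin n), 1 / (gval (a ℓ) (b ℓ) I * Y I) ≤ 0) ∧
          ∑ I : Finset (Fin n), Y I * gval c c0 I < gval c c0 Istar) := by
  simp only [one_div]
  constructor
  · rintro ⟨y, hy0, hfull, hshift, hobj⟩
    obtain ⟨Y, rfl⟩ := exists_zetaAbove_eq y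
    rw [posSemidef_Mfull_zetaAbove_iff] at hfull
    simp only [shiftVec_zetaAbove, posSemidef_Mnm1_zetaAbove_iff] at hshift
    rw [objective_zetaAbove] at hobj
    rw [zetaAbove_empty] at hy0
    obtain ⟨H₀, hH₀, hgap⟩ := exists_pos_lt_of_sum_mul_lt hfull hy0 hobj
    obtain ⟨ℓ₀, hℓ₀⟩ : ∃ ℓ, gval (a ℓ) (b ℓ) H₀ < 0 := by
      by_contra! hfeas
      exact (hIstar_opt H₀ hfeas).not_gt hgap
    have hYpos : ∀ H, 0 < Y H := fun H => by
      rcases eq_or_ne H H₀ with rfl | hH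
      · exact hH₀
      · have hv := (hshift ℓ₀).pos_of_ne (mul_neg_of_neg_of_pos hℓ₀ hH₀) hH
        exact (hfull H).lt_of_ne (right_ne_zero_of_mul hv.ne').symm
    refine ⟨Y, hYpos, hy0, fun ℓ => ?_, fun ℓ => ?_, hobj⟩ <;> obtain ⟨K, hK⟩ := hnonred ℓ
    · have hvK := mul_neg_of_neg_of_pos hK (hYpos K)
      exact ⟨K, hvK, fun J hJ => (hshift ℓ).pos_of_ne hvK hJ⟩
    · exact (hshift ℓ).sum_inv_nonpos (mul_neg_of_neg_of_pos hK (hYpos K))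
  · rintro ⟨Y, hYpos, hsum, hsign, hinv, hobj⟩
    refine ⟨zetaAbove Y, by rw [zetaAbove_empty, hsum],
      (posSemidef_Mfull_zetaAbove_iff Y).2 fun H => (hYpos H).le, fun ℓ => ?_,
      by rwa [objective_zetaAbove]⟩
    obtain ⟨K, hK, hpos⟩ := hsign ℓ
    rw [shiftVec_zetaAbove, posSemidef_Mnm1_zetaAbove_iff]
    exact nonnegOnSumZero_of_sum_inv_nonpos hK hpos (hinv ℓ)

/-- Characterization of integrality gaps of `Las_{n-1}` for 0/1 integer linear programs:
the objective is `f(x) = ∑ i, c i * x i + c0`, the constraints are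
`g_ℓ(x) = ∑ i, a ℓ i * x i + b ℓ ≥ 0`, each constraint is non-redundant, and
`Istar` is an optimal integral feasible point. -/
theorem lasserre_level_pred_gap_iff (n m : ℕ) (hn : 1 ≤ n) (hm : 1 ≤ m)
    (c : Fin n → ℝ) (c0 : ℝ)
    (a : Fin m → Fin n → ℝ) (b : Fin m → ℝ)
    (hnonred : ∀ ℓ : Fin m, ∃ I : Finset (Fin n), gval (a ℓ) (b ℓ) I < 0)
    (Istar : Finset (Fin n))
    (hIstar_feas : ∀ ℓ : Fin m, 0 ≤ gval (a ℓ) (b ℓ) Istar)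
    (hIstar_opt : ∀ I : Finset (Fin n), (∀ ℓ : Fin m, 0 ≤ gval (a ℓ) (b ℓ) I) →
      gval c c0 Istar ≤ gval c c0 I) :
    (∃ y : Finset (Fin n) → ℝ,
        y ∅ = 1 ∧
        (Mfull y).PosSemidef ∧
        (∀ ℓ : Fin m, (Mnm1 (shiftVec (a ℓ) (b ℓ) y)).PosSemidef) ∧
        c0 * y ∅ + (∑ i : Fin n, c i * y {i}) < gval c c0 Istar)
      ↔ (∃ Y : Finset (Fin n) → ℝ,
          (∀ I : Finset (Fin n), 0 < Y I) ∧
          (∑ I : Finset (Fin n), Y I = 1) ∧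
          (∀ ℓ : Fin m, ∃ K : Finset (Fin n),
            gval (a ℓ) (b ℓ) K * Y K < 0 ∧
            ∀ J : Finset (Fin n), J ≠ K → 0 < gval (a ℓ) (b ℓ) J * Y J) ∧
          (∀ ℓ : Fin m, ∑ I : Finset (Fin n), 1 / (gval (a ℓ) (b ℓ) I * Y I) ≤ 0) ∧
          ∑ I : Finset (Fin n), Y I * gval c c0 I < gval c c0 Istar) :=
  lasserre_level_pred_gap_iff_general n m c c0 a b hnonred Istar hIstar_opt
end

section
/- Let g(x) = Σ_{i=1}^n a_i x_i − b be an affine-linear function that is a Single Vertex Cutting constraint on {0,1}^n. Then b ≠ 0 and a_i ≠ 0 for all i = 1,...,n; moreover, letting P = {i ∈ N : a_i < 0}, one has Σ_{i∈P} a_i < b, while Σ_{i∈Q} a_i > b for every subset Q ⊆ N with Q ≠ P. -/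
open Finset

/-- Characterization of linear Single Vertex Cutting constraints
`g(x) = ∑ i, a i * x i - b ≥ 0`: here `g(x_I) = ∑_{i ∈ I} a i - b`, and the
SVC property says exactly one 0/1 point has `g < 0` while all others have `g > 0`. -/
theorem linear_svc_characterization (n : ℕ) (hn : 1 ≤ n)
    (a : Fin n → ℝ) (b : ℝ)
    (hSVC : ∃ I : Finset (Fin n),
      ((∑ i ∈ I, a i) - b < 0) ∧
      ∀ J : Finset (Fin n), J ≠ I → 0 < (∑ i ∈ J, a i) - b) :
    b ≠ 0 ∧ (∀ i : Fin n, a i ≠ 0) ∧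
      ((∑ i ∈ Finset.univ.filter (fun i => a i < 0), a i) < b) ∧
      (∀ Q : Finset (Fin n), Q ≠ Finset.univ.filter (fun i => a i < 0) →
        b < ∑ i ∈ Q, a i) := by
  obtain ⟨I, hI, hJ⟩ := hSVC
  set P : Finset (Fin n) := Finset.univ.filter (fun i => a i < 0) with hP
  -- P minimizes the sum
  have hmin : ∀ J : Finset (Fin n), (∑ i ∈ P, a i) ≤ ∑ i ∈ J, a i := by
    intro J
    have h1 : (∑ i ∈ P, a i) ≤ ∑ i ∈ P ∩ J, a i := by
      have : ∑ i ∈ P, a i = (∑ i ∈ P ∩ J, a i) + ∑ i ∈ P \ J, a i := by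
        rw [Finset.sum_inter_add_sum_sdiff]
      rw [this]
      have : (∑ i ∈ P \ J, a i) ≤ 0 := by
        apply Finset.sum_nonpos
        intro i hi
        have := (Finset.mem_filter.mp (Finset.mem_sdiff.mp hi).1).2
        linarith
      linarith
    have h2 : (∑ i ∈ P ∩ J, a i) ≤ ∑ i ∈ J, a i := by
      have heq : ∑ i ∈ J, a i = (∑ i ∈ J ∩ P, a i) + ∑ i ∈ J \ P, a i := by
        rw [Finset.sum_inter_add_sum_sdiff]
      rw [heq, Finset.inter_comm]
      have : (0:ℝ) ≤ ∑ i ∈ J \ P, a i := by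
        apply Finset.sum_nonneg
        intro i hi
        have hiP := (Finset.mem_sdiff.mp hi).2
        simp only [hP, Finset.mem_filter, Finset.mem_univ, true_and] at hiP
        linarith [not_lt.mp hiP]
      linarith
    linarith
  -- I = P
  have hIP : I = P := by
    by_contra h
    have := hJ P (fun hc => h hc.symm)
    have := hmin I
    linarith
  subst hIP
  have hPb : (∑ i ∈ P, a i) < b := by linarith
  have hQ : ∀ Q : Finset (Fin n), Q ≠ P → b < ∑ i ∈ Q, a i := by
    intro Q hQP
    have := hJ Q hQP
    linarith
  refine ⟨?_, ?_, hPb, hQ⟩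
  · intro hb0
    by_cases he : (∅ : Finset (Fin n)) = P
    · rw [← he] at hPb; simp [hb0] at hPb
    · have := hQ ∅ he; simp [hb0] at this
  · intro i hai
    have hiP : i ∉ P := by simp [hP, hai]
    have hne : insert i P ≠ P := by
      intro hc
      exact hiP (hc ▸ Finset.mem_insert_self i P)
    have := hQ (insert i P) hne
    rw [Finset.sum_insert hiP, hai] at this
    linarith
end

section
/- Let n ≥ 1, let k ≥ 2 be an integer, and set P = k · 2^{2n+1}. Define y_I^N := 2^n / (P·|I| − 1) for every nonempty I ⊆ N, and y_∅^N := 1 − Σ_{∅≠I⊆N} y_I^N. Then: (i) y_I^N > 0 for all I ⊆ N; (ii) Σ_{I⊆N} y_I^N = 1; (iii) Σ_{I⊆N} 1/(y_I^N · (|I| − 1/P)) < 0 (where for I = ∅ the factor |I| − 1/P = −1/P is negative and for all other I it is positive); and (iv) Σ_{I⊆N} |I| · y_I^N ≤ 1/k. Consequently the Lasserre relaxation at level n−1 of the Min-Knapsack instance min{ Σ_i x_i : Σ_i x_i ≥ 1/P, x ∈ {0,1}^n } has optimum at most 1/k while the integral optimum is 1, giving integrality gap at least k. -/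
/-!
The moment vector `y_J = ∑_{K ⊇ J} Y_K` of the signed measure `∑_K Y_K δ_{x_K}` on `{0,1}^n` has
moment matrix `∑_K Y_K v_K v_Kᵀ`, where `v_K` lists the monomials evaluated at `x_K`, and
localizing matrix `∑_K g(x_K) Y_K v_K v_Kᵀ` for the knapsack constraint `g`. Only the weight of
`K = ∅` is negative. For a test vector `u` indexed by the monomials of degree `< n`, the numbers
`t_K = v_K ⬝ u` satisfy `∑_K (-1)^|K| t_K = 0`, hence `|t_∅| ≤ ∑_{K ≠ ∅} |t_K|`, and Cauchy–Schwarz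
with weights `1 / (g(x_K) Y_K)` turns `∑_K 1 / (g(x_K) Y_K) ≤ 0` into `∑_K g(x_K) Y_K t_K² ≥ 0`.
The remaining conditions are arithmetic with `P = 2k·4^n`: every nonempty `I` has
`|I| Y_I ≤ 2^n / (P - 1)`, so the objective is at most `(2^n - 1) 2^n / (P - 1) ≤ 1 / k`.
-/

open Finset Matrix

section Alternating

variable {α : Type*} [Fintype α] [DecidableEq α]

theorem Finset.sum_superset_neg_one_pow_card {R : Type*} [Ring R] {I : Finset α}
    (hI : I ≠ univ) : ∑ K with I ⊆ K, (-1 : R) ^ #K = 0 := by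
  have hsupersets : ({K | I ⊆ K} : Finset (Finset α)) = Iᶜ.powerset.image (I ∪ ·) := by
    rw [compl_eq_univ_sdiff, ← Icc_eq_image_powerset (subset_univ I)]
    ext K
    simp
  have hdisj {J : Finset α} (hJ : J ∈ Iᶜ.powerset) : Disjoint I J :=
    disjoint_of_subset_right (mem_powerset.mp hJ) disjoint_compl_right
  have hIc : Iᶜ.Nonempty := by simpa [nonempty_iff_ne_empty] using hI
  rw [hsupersets, sum_image fun J hJ J' hJ' h => by
    rw [← union_sdiff_cancel_left (hdisj hJ), ← union_sdiff_cancel_left (hdisj hJ'), h]]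
  calc ∑ J ∈ Iᶜ.powerset, (-1 : R) ^ #(I ∪ J)
      = (-1) ^ #I * ((∑ J ∈ Iᶜ.powerset, (-1 : ℤ) ^ #J : ℤ) : R) := by
        push_cast
        rw [mul_sum]
        exact sum_congr rfl fun J hJ => by rw [card_union_of_disjoint (hdisj hJ), pow_add]
    _ = 0 := by rw [sum_powerset_neg_one_pow_card_of_nonempty hIc, Int.cast_zero, mul_zero]

end Alternating

section QuadraticForm

variable {ι κ : Type*} [Fintype ι] [Fintype κ]

theorem Matrix.dotProduct_sum_smul_vecMulVec_mulVec {R : Type*} [CommSemiring R] (w : κ → R)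
    (v : κ → ι → R) (x : ι → R) :
    x ⬝ᵥ (∑ k, w k • vecMulVec (v k) (v k)) *ᵥ x = ∑ k, w k * (v k ⬝ᵥ x) ^ 2 := by
  simp only [sum_mulVec, dotProduct_sum, smul_mulVec, vecMulVec_mulVec, dotProduct_smul,
    smul_eq_mul, op_smul_eq_mul, dotProduct_comm x (v _), sq]

theorem abs_le_sum_erase_abs_of_sum_mul_eq_zero [DecidableEq κ] {ε t : κ → ℝ}
    (hε : ∀ k, |ε k| = 1) (h : ∑ k, ε k * t k = 0) (k₀ : κ) :
    |t k₀| ≤ ∑ k ∈ univ.erase k₀, |t k| := by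
  rw [← add_sum_erase _ _ (mem_univ k₀), add_eq_zero_iff_eq_neg] at h
  calc |t k₀| = |ε k₀ * t k₀| := by rw [abs_mul, hε, one_mul]
    _ = |∑ k ∈ univ.erase k₀, ε k * t k| := by rw [h, abs_neg]
    _ ≤ ∑ k ∈ univ.erase k₀, |ε k * t k| := abs_sum_le_sum_abs _ _
    _ = ∑ k ∈ univ.erase k₀, |t k| := by simp only [abs_mul, hε, one_mul]

theorem sum_mul_sq_nonneg_of_sum_inv_nonpos [DecidableEq κ] {c t : κ → ℝ} {k₀ : κ}
    (hneg : c k₀ < 0) (hpos : ∀ k ≠ k₀, 0 < c k) (hinv : ∑ k, 1 / c k ≤ 0)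
    (ht : |t k₀| ≤ ∑ k ∈ univ.erase k₀, |t k|) :
    0 ≤ ∑ k, c k * t k ^ 2 := by
  have hpos' : ∀ k ∈ univ.erase k₀, 0 < c k := fun k hk => hpos k (ne_of_mem_erase hk)
  set A := ∑ k ∈ univ.erase k₀, 1 / c k
  set S := ∑ k ∈ univ.erase k₀, c k * t k ^ 2
  have hS : 0 ≤ S := sum_nonneg fun k hk => mul_nonneg (hpos' k hk).le (sq_nonneg _)
  have hA : A ≤ -(1 / c k₀) := by
    rw [← add_sum_erase _ _ (mem_univ k₀)] at hinv
    linarith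
  have hCS : (∑ k ∈ univ.erase k₀, |t k|) ^ 2 ≤ A * S :=
    sum_sq_le_sum_mul_sum_of_sq_le_mul _ (fun k hk => (one_div_pos.mpr (hpos' k hk)).le)
      (fun k hk => mul_nonneg (hpos' k hk).le (sq_nonneg _)) fun k hk => by
        rw [sq_abs, ← mul_assoc, one_div_mul_cancel (hpos' k hk).ne', one_mul]
  have hsq : t k₀ ^ 2 ≤ -(1 / c k₀) * S := calc
    t k₀ ^ 2 = |t k₀| ^ 2 := (sq_abs _).symm
    _ ≤ (∑ k ∈ univ.erase k₀, |t k|) ^ 2 := pow_le_pow_left₀ (abs_nonneg _) ht 2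
    _ ≤ A * S := hCS
    _ ≤ -(1 / c k₀) * S := mul_le_mul_of_nonneg_right hA hS
  have hdominated : -c k₀ * t k₀ ^ 2 ≤ S := by
    calc -c k₀ * t k₀ ^ 2 ≤ -c k₀ * (-(1 / c k₀) * S) :=
          mul_le_mul_of_nonneg_left hsq (by linarith)
      _ = S := by field_simp [hneg.ne]
  rw [← add_sum_erase _ _ (mem_univ k₀)]
  linarith

end QuadraticForm

section MomentVector

variable {α : Type*} [Fintype α] [DecidableEq α]

/-- The monomial `x^I = ∏_{i ∈ I} x_i` evaluated at the 0/1-point `x_K`. -/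
def subsetIndicator (K I : Finset α) : ℝ := if I ⊆ K then 1 else 0

/-- The moment vector `J ↦ ∑_{K ⊇ J} Y K` of the measure on `{0,1}^α` with mass `Y K` at `x_K`. -/
def supersetSum (Y : Finset α → ℝ) (J : Finset α) : ℝ := ∑ K with J ⊆ K, Y K

theorem supersetSum_eq_sum_mul_subsetIndicator (Y : Finset α → ℝ) (J : Finset α) :
    supersetSum Y J = ∑ K, Y K * subsetIndicator K J := by
  simp [supersetSum, subsetIndicator, sum_filter]

theorem supersetSum_union (Y : Finset α → ℝ) (I J : Finset α) :
    supersetSum Y (I ∪ J) = ∑ K, Y K * (subsetIndicator K I * subsetIndicator K J) := by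
  simp only [supersetSum_eq_sum_mul_subsetIndicator, subsetIndicator, union_subset_iff]
  exact sum_congr rfl fun K _ => by split_ifs <;> simp_all

theorem supersetSum_empty (Y : Finset α → ℝ) : supersetSum Y ∅ = ∑ K, Y K := by
  simp [supersetSum]

theorem sum_supersetSum_singleton (Y : Finset α → ℝ) :
    ∑ i, supersetSum Y {i} = ∑ K, (#K : ℝ) * Y K := by
  simp only [supersetSum, singleton_subset_iff, sum_filter]
  rw [sum_comm]
  simp

end MomentVector

theorem shiftVec_supersetSum {n : ℕ} (a : Fin n → ℝ) (b : ℝ) (Y : Finset (Fin n) → ℝ)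
    (I : Finset (Fin n)) :
    shiftVec a b (supersetSum Y) I = supersetSum (fun K => Y K * (∑ i ∈ K, a i + b)) I := by
  simp only [shiftVec, supersetSum, insert_subset_iff, sum_filter, mul_sum]
  rw [sum_comm, ← sum_add_distrib]
  refine sum_congr rfl fun K _ => ?_
  split_ifs with hIK
  · simp [hIK, mul_add, mul_sum, mul_comm]
  · simp [hIK]

theorem Mfull_supersetSum {n : ℕ} (Y : Finset (Fin n) → ℝ) :
    Mfull (supersetSum Y) = ∑ K, Y K • vecMulVec (subsetIndicator K) (subsetIndicator K) := by
  ext I J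
  simp [Mfull, supersetSum_union, Matrix.sum_apply, vecMulVec_apply]

theorem Mnm1_supersetSum {n : ℕ} (Y : Finset (Fin n) → ℝ) :
    Mnm1 (supersetSum Y) = ∑ K, Y K •
      vecMulVec (fun I : Idx n => subsetIndicator K I.1) (fun I => subsetIndicator K I.1) := by
  ext I J
  simp [Mnm1, supersetSum_union, Matrix.sum_apply, vecMulVec_apply]

theorem posSemidef_Mfull_supersetSum {n : ℕ} {Y : Finset (Fin n) → ℝ} (hY : ∀ K, 0 ≤ Y K) :
    (Mfull (supersetSum Y)).PosSemidef := by
  rw [Mfull_supersetSum]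
  exact posSemidef_sum _ fun K _ => (posSemidef_vecMulVec_self_star _).smul (hY K)

theorem isHermitian_Mnm1 {n : ℕ} (w : Finset (Fin n) → ℝ) : (Mnm1 w).IsHermitian := by
  ext I J
  simp [Mnm1, union_comm]

theorem sum_neg_one_pow_card_mul_dotProduct_subsetIndicator {n : ℕ} (x : Idx n → ℝ) :
    ∑ K, (-1 : ℝ) ^ #K * ((fun I : Idx n => subsetIndicator K I.1) ⬝ᵥ x) = 0 := by
  simp only [dotProduct, mul_sum, subsetIndicator]
  rw [sum_comm]
  refine sum_eq_zero fun I _ => ?_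
  simp only [mul_ite, mul_zero, ite_mul, zero_mul, ← sum_mul, ← sum_filter]
  rw [sum_superset_neg_one_pow_card I.2, zero_mul]

theorem posSemidef_Mnm1_supersetSum {n : ℕ} {c : Finset (Fin n) → ℝ} {K₀ : Finset (Fin n)}
    (hneg : c K₀ < 0) (hpos : ∀ K ≠ K₀, 0 < c K) (hinv : ∑ K, 1 / c K ≤ 0) :
    (Mnm1 (supersetSum c)).PosSemidef := by
  refine .of_dotProduct_mulVec_nonneg (isHermitian_Mnm1 _) fun x => ?_
  rw [star_trivial, Mnm1_supersetSum, dotProduct_sum_smul_vecMulVec_mulVec]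
  exact sum_mul_sq_nonneg_of_sum_inv_nonpos hneg hpos hinv <|
    abs_le_sum_erase_abs_of_sum_mul_eq_zero (by simp)
      (sum_neg_one_pow_card_mul_dotProduct_subsetIndicator x) K₀

namespace MinKnapsackGap

variable {n k : ℕ} {P : ℝ} {Y : Finset (Fin n) → ℝ}

theorem one_lt_P (hk : 1 ≤ k) (hP : P = (k : ℝ) * 2 ^ (2 * n + 1)) : 1 < P := by
  have : (1 : ℝ) ≤ k := by exact_mod_cast hk
  have : (2 : ℝ) ≤ 2 ^ (2 * n + 1) := le_self_pow₀ one_le_two (by omega)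
  rw [hP]
  nlinarith

theorem one_le_card {I : Finset (Fin n)} (hI : I ≠ ∅) : (1 : ℝ) ≤ #I := by
  exact_mod_cast card_pos.mpr (nonempty_iff_ne_empty.mpr hI)

theorem card_erase_empty : (#(univ.erase (∅ : Finset (Fin n))) : ℝ) = 2 ^ n - 1 := by
  rw [card_erase_of_mem (mem_univ _), card_univ, Fintype.card_finset, Fintype.card_fin,
    Nat.cast_sub Nat.one_le_two_pow]
  push_cast
  ring

theorem pos_of_ne_empty (hP1 : 1 < P)
    (hYne : ∀ I : Finset (Fin n), I ≠ ∅ → Y I = 2 ^ n / (P * I.card - 1))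
    {I : Finset (Fin n)} (hI : I ≠ ∅) : 0 < Y I := by
  rw [hYne I hI]
  have := one_le_card hI
  exact div_pos (by positivity) (by nlinarith)

theorem mul_card_sub_inv_eq (hP1 : 1 < P)
    (hYne : ∀ I : Finset (Fin n), I ≠ ∅ → Y I = 2 ^ n / (P * I.card - 1))
    {I : Finset (Fin n)} (hI : I ≠ ∅) : Y I * (#I - 1 / P) = 2 ^ n / P := by
  have := one_le_card hI
  have : P * #I - 1 ≠ 0 := by nlinarith
  rw [hYne I hI]
  field_simp

theorem card_mul_le (hP1 : 1 < P)
    (hYne : ∀ I : Finset (Fin n), I ≠ ∅ → Y I = 2 ^ n / (P * I.card - 1))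
    {I : Finset (Fin n)} (hI : I ≠ ∅) : #I * Y I ≤ 2 ^ n / (P - 1) := by
  have := one_le_card hI
  rw [hYne I hI, mul_div_assoc', div_le_div_iff₀ (by nlinarith) (by linarith)]
  nlinarith [one_le_pow₀ (M₀ := ℝ) (n := n) one_le_two]

theorem sum_card_mul_le (hk : 1 ≤ k) (hP : P = (k : ℝ) * 2 ^ (2 * n + 1))
    (hYne : ∀ I : Finset (Fin n), I ≠ ∅ → Y I = 2 ^ n / (P * I.card - 1)) :
    ∑ I, (#I : ℝ) * Y I ≤ 1 / k := by
  have hP1 := one_lt_P hk hP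
  have hk' : (1 : ℝ) ≤ k := by exact_mod_cast hk
  have hq : (1 : ℝ) ≤ 2 ^ n := one_le_pow₀ one_le_two
  rw [← add_sum_erase _ _ (mem_univ ∅), card_empty, Nat.cast_zero, zero_mul, zero_add]
  calc ∑ I ∈ univ.erase ∅, (#I : ℝ) * Y I
      ≤ #(univ.erase (∅ : Finset (Fin n))) • (2 ^ n / (P - 1)) :=
        sum_le_card_nsmul _ _ _ fun I hI => card_mul_le hP1 hYne (ne_of_mem_erase hI)
    _ = (2 ^ n - 1) * 2 ^ n / (P - 1) := by rw [nsmul_eq_mul, card_erase_empty, mul_div_assoc]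
    _ ≤ 1 / k := by
        rw [div_le_div_iff₀ (by linarith) (by linarith), hP, pow_succ, pow_mul']
        nlinarith [mul_le_mul hk' hq zero_le_one (by linarith)]

theorem sum_ne_empty_lt_one (hk : 2 ≤ k) (hP : P = (k : ℝ) * 2 ^ (2 * n + 1))
    (hYne : ∀ I : Finset (Fin n), I ≠ ∅ → Y I = 2 ^ n / (P * I.card - 1)) :
    ∑ I ∈ univ.filter (· ≠ ∅), Y I < 1 := by
  have hP1 := one_lt_P (by omega) hP
  have hk' : (2 : ℝ) ≤ k := by exact_mod_cast hk
  calc ∑ I ∈ univ.filter (· ≠ ∅), Y I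
      ≤ ∑ I ∈ univ.filter (· ≠ ∅), (#I : ℝ) * Y I := sum_le_sum fun I hI => by
        have hI := (mem_filter.mp hI).2
        exact le_mul_of_one_le_left (pos_of_ne_empty hP1 hYne hI).le (one_le_card hI)
    _ = ∑ I, (#I : ℝ) * Y I := by
        rw [filter_ne', ← add_sum_erase _ _ (mem_univ ∅), card_empty, Nat.cast_zero, zero_mul,
          zero_add]
    _ ≤ 1 / k := sum_card_mul_le (by omega) hP hYne
    _ < 1 := by rw [div_lt_one (by linarith)]; linarith

theorem sum_inv_neg (hP1 : 1 < P)
    (hYne : ∀ I : Finset (Fin n), I ≠ ∅ → Y I = 2 ^ n / (P * I.card - 1))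
    (hY0 : 0 < Y ∅) (hY1 : Y ∅ ≤ 1) :
    ∑ I, 1 / (Y I * ((#I : ℝ) - 1 / P)) < 0 := by
  rw [← add_sum_erase _ _ (mem_univ ∅),
    sum_congr rfl fun I hI => by rw [mul_card_sub_inv_eq hP1 hYne (ne_of_mem_erase hI)],
    sum_const, nsmul_eq_mul, card_erase_empty, card_empty, Nat.cast_zero]
  have hq : (1 : ℝ) ≤ 2 ^ n := one_le_pow₀ one_le_two
  have hempty : 1 / (Y ∅ * (0 - 1 / P)) = -(P / Y ∅) := by rw [zero_sub]; field_simp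
  have hrest : (2 ^ n - 1) * (1 / (2 ^ n / P)) = P - P / 2 ^ n := by field_simp
  have : P ≤ P / Y ∅ := by rw [le_div_iff₀ hY0]; nlinarith
  have : 0 < P / 2 ^ n := by positivity
  linarith

theorem isLeast_card_of_one_le (hn : 1 ≤ n) (hP1 : 1 ≤ P) :
    IsLeast {val : ℝ | ∃ I : Finset (Fin n), 1 / P ≤ (#I : ℝ) ∧ val = #I} 1 := by
  refine ⟨⟨{⟨0, hn⟩}, ?_, by simp⟩, ?_⟩
  · rw [card_singleton, Nat.cast_one, div_le_one (by linarith)]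
    exact hP1
  · rintro _ ⟨I, hI, rfl⟩
    refine one_le_card fun hempty => ?_
    rw [hempty, card_empty, Nat.cast_zero] at hI
    have : 0 < 1 / P := by positivity
    linarith

end MinKnapsackGap

/-- Unbounded integrality gap for Min-Knapsack `min{∑ x_i : ∑ x_i ≥ 1/P}` with
`P = k·2^{2n+1}`: the explicit family `Y` is positive, sums to one, satisfies the PSD
condition, has objective value at most `1/k`, and hence yields a feasible solution of
the level-`(n-1)` Lasserre relaxation of value at most `1/k`, while the integral optimum
is `1`. -/
theorem min_knapsack_unbounded_gap (n k : ℕ) (hn : 1 ≤ n) (hk : 2 ≤ k)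
    (P : ℝ) (hP : P = (k : ℝ) * 2 ^ (2 * n + 1))
    (Y : Finset (Fin n) → ℝ)
    (hYne : ∀ I : Finset (Fin n), I ≠ ∅ → Y I = 2 ^ n / (P * I.card - 1))
    (hY0 : Y ∅ = 1 - ∑ I ∈ Finset.univ.filter (fun I : Finset (Fin n) => I ≠ ∅), Y I) :
    (∀ I : Finset (Fin n), 0 < Y I) ∧
    (∑ I : Finset (Fin n), Y I = 1) ∧
    (∑ I : Finset (Fin n), 1 / (Y I * ((I.card : ℝ) - 1 / P)) < 0) ∧
    (∑ I : Finset (Fin n), (I.card : ℝ) * Y I ≤ 1 / k) ∧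
    (∃ y : Finset (Fin n) → ℝ,
        y ∅ = 1 ∧
        (Mfull y).PosSemidef ∧
        (Mnm1 (shiftVec (fun _ : Fin n => (1 : ℝ)) (-(1 / P)) y)).PosSemidef ∧
        (∑ i : Fin n, y {i}) ≤ 1 / k) ∧
    IsLeast {val : ℝ | ∃ I : Finset (Fin n), 1 / P ≤ (I.card : ℝ) ∧ val = (I.card : ℝ)} 1 := by
  have hP1 := MinKnapsackGap.one_lt_P (by omega) hP
  have hY0pos : 0 < Y ∅ := by linarith [MinKnapsackGap.sum_ne_empty_lt_one hk hP hYne]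
  have hpos (I : Finset (Fin n)) : 0 < Y I := by
    rcases eq_or_ne I ∅ with rfl | hI
    exacts [hY0pos, MinKnapsackGap.pos_of_ne_empty hP1 hYne hI]
  have hsum : ∑ I, Y I = 1 := by
    rw [← add_sum_erase _ _ (mem_univ ∅), ← filter_ne', hY0, sub_add_cancel]
  have hY0le : Y ∅ ≤ 1 := hsum ▸ single_le_sum (fun I _ => (hpos I).le) (mem_univ ∅)
  have hinv := MinKnapsackGap.sum_inv_neg hP1 hYne hY0pos hY0le
  have hobj := MinKnapsackGap.sum_card_mul_le (by omega) hP hYne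
  have hshift : shiftVec (fun _ => 1) (-(1 / P)) (supersetSum Y)
      = supersetSum fun K => Y K * (#K - 1 / P) := by
    ext I
    simp [shiftVec_supersetSum, sub_eq_add_neg]
  refine ⟨hpos, hsum, hinv, hobj, ⟨supersetSum Y, by rw [supersetSum_empty, hsum],
    posSemidef_Mfull_supersetSum fun K => (hpos K).le, ?_, by rwa [sum_supersetSum_singleton]⟩,
    MinKnapsackGap.isLeast_card_of_one_le hn hP1.le⟩
  rw [hshift]
  refine posSemidef_Mnm1_supersetSum (K₀ := ∅) ?_ (fun K hK => ?_) hinv.le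
  · rw [card_empty, Nat.cast_zero, zero_sub, mul_neg, neg_lt_zero]
    positivity
  · rw [MinKnapsackGap.mul_card_sub_inv_eq hP1 hYne hK]
    positivity
end

section
/- Let n ≥ 1 and b = 2^{−(n+1)}. For each P ⊆ N define the constraint g_P(x) := Σ_{i∈P}(1 − x_i) + Σ_{i∈N∖P} x_i − b, so that g_P(x_I) = |I Δ P| − b for every I ⊆ N (Δ denoting symmetric difference). Then: (i) no x ∈ {0,1}^n satisfies g_P(x) ≥ 0 for all P ⊆ N (indeed g_P(x_P) = −b < 0), so the integer hull is empty; and (ii) the symmetric assignment y_I^N = 2^{−n} for all I ⊆ N satisfies, for every P ⊆ N: g_P(x_I) y_I^N < 0 exactly for I = P, g_P(x_I) y_I^N > 0 for all I ≠ P, and Σ_{I⊆N} 1/(g_P(x_I) y_I^N) ≤ 0, the last being equivalent to Σ_{∅≠I⊆N} 1/(|I| − b) ≤ 1/b. -/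
/-!
Since `I ↦ I ∆ P` permutes the subsets of `N`, every constraint `g_P` takes the same multiset of
values on the 0/1 points: `-b` once (at `x_P`), and `|J| - b ≥ 1/2` for each nonempty `J`. Hence
`∑_I 1 / (g_P(x_I) y_I) = 2^n (∑_{J ≠ ∅} 1 / (|J| - b) - 1 / b)`, and the crude bound of each
term by `2` gives `∑_{J ≠ ∅} 1 / (|J| - b) ≤ 2 · 2^n = 1 / b`.
-/

open Finset

open scoped symmDiff

namespace Finset

variable {α : Type*} [Fintype α] [DecidableEq α]

theorem sum_symmDiff_right {M : Type*} [AddCommMonoid M] (P : Finset α) (f : Finset α → M) :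
    ∑ I, f (I ∆ P) = ∑ I, f I :=
  Fintype.sum_bijective _ (symmDiff_left_involutive P).bijective _ _ fun _ => rfl

theorem sum_univ_eq_add_sum_ne_empty {M : Type*} [AddCommMonoid M] (f : Finset α → M) :
    ∑ I, f I = f ∅ + ∑ I ∈ univ.filter (fun I => I ≠ ∅), f I := by
  rw [filter_ne' univ ∅, add_sum_erase _ _ (mem_univ _)]

theorem sum_one_div_card_sub_le {b : ℝ} (hb : b ≤ 1 / 2) :
    ∑ I ∈ univ.filter (fun I : Finset α => I ≠ ∅), 1 / ((#I : ℝ) - b) ≤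
      2 ^ (Fintype.card α + 1) := by
  have hterm : ∀ I ∈ univ.filter (fun I : Finset α => I ≠ ∅), 1 / ((#I : ℝ) - b) ≤ 2 := by
    intro I hI
    have hI : (1 : ℝ) ≤ #I := by
      exact_mod_cast card_pos.2 (nonempty_iff_ne_empty.2 (mem_filter.1 hI).2)
    rw [div_le_iff₀ (by linarith)]
    linarith
  calc ∑ I ∈ univ.filter (fun I : Finset α => I ≠ ∅), 1 / ((#I : ℝ) - b)
      ≤ #(univ.filter (fun I : Finset α => I ≠ ∅)) • (2 : ℝ) := sum_le_card_nsmul _ _ _ hterm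
    _ ≤ #(univ : Finset (Finset α)) • (2 : ℝ) := by gcongr; exact filter_subset _ _
    _ = 2 ^ (Fintype.card α + 1) := by
      rw [card_univ, Fintype.card_finset, nsmul_eq_mul, pow_succ]; push_cast; ring

theorem sum_one_div_card_symmDiff_sub_mul (P : Finset α) (b c : ℝ) :
    ∑ I, 1 / ((#(I ∆ P) - b) * c) =
      c⁻¹ * (∑ I ∈ univ.filter (fun I : Finset α => I ≠ ∅), 1 / ((#I : ℝ) - b) - 1 / b) := by
  rw [sum_symmDiff_right P fun J => 1 / (((#J : ℝ) - b) * c), sum_univ_eq_add_sum_ne_empty,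
    mul_sub, mul_sum]
  simp only [card_empty, Nat.cast_zero, zero_sub, one_div, mul_inv, inv_neg, mul_comm _ c⁻¹]
  ring

end Finset

theorem undetected_empty_integer_hull_general (n : ℕ)
    (b : ℝ) (hb : b = 1 / 2 ^ (n + 1))
    (Y : Finset (Fin n) → ℝ) (hY : ∀ I : Finset (Fin n), Y I = 1 / 2 ^ n) :
    (¬ ∃ I : Finset (Fin n), ∀ P : Finset (Fin n),
        0 ≤ ((((I \ P) ∪ (P \ I)).card : ℝ) - b)) ∧
    (∀ P : Finset (Fin n),
      (((((P \ P) ∪ (P \ P)).card : ℝ) - b) * Y P < 0) ∧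
      (∀ I : Finset (Fin n), I ≠ P →
        0 < ((((I \ P) ∪ (P \ I)).card : ℝ) - b) * Y I) ∧
      (∑ I : Finset (Fin n), 1 / (((((I \ P) ∪ (P \ I)).card : ℝ) - b) * Y I) ≤ 0) ∧
      ((∑ I : Finset (Fin n), 1 / (((((I \ P) ∪ (P \ I)).card : ℝ) - b) * Y I) ≤ 0)
        ↔ (∑ I ∈ Finset.univ.filter (fun I : Finset (Fin n) => I ≠ ∅),
            1 / ((I.card : ℝ) - b)) ≤ 1 / b)) := by
  simp only [← Finset.symmDiff_def]
  have hb_pos : 0 < b := by rw [hb]; positivity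
  have hb_inv : 1 / b = 2 ^ (n + 1) := by rw [hb, one_div_one_div]
  have hb_half : b ≤ 1 / 2 := by
    rw [hb]; gcongr; exact le_self_pow₀ (by norm_num) (by omega)
  have hY_pos : ∀ I, 0 < Y I := fun I => by rw [hY]; positivity
  have hsum (P : Finset (Fin n)) : ∑ I, 1 / ((#(I ∆ P) - b) * Y I) =
      2 ^ n * (∑ I ∈ univ.filter (fun I : Finset (Fin n) => I ≠ ∅), 1 / ((#I : ℝ) - b) -
        1 / b) := by
    simp only [hY]
    rw [sum_one_div_card_symmDiff_sub_mul, one_div, inv_inv]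
  have hbound := sum_one_div_card_sub_le (α := Fin n) hb_half
  rw [Fintype.card_fin, ← hb_inv] at hbound
  refine ⟨fun ⟨I, hI⟩ => ?_, fun P => ⟨?_, fun I hIP => ?_, ?_, ?_⟩⟩
  · have hII := hI I
    rw [symmDiff_self, bot_eq_empty, card_empty, Nat.cast_zero] at hII
    linarith
  · simpa using mul_neg_of_neg_of_pos (neg_neg_of_pos hb_pos) (hY_pos P)
  · have hcard : (1 : ℝ) ≤ #(I ∆ P) := by exact_mod_cast card_pos.2 (symmDiff_nonempty.2 hIP)
    exact mul_pos (by linarith) (hY_pos I)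
  · rw [hsum]
    exact mul_nonpos_of_nonneg_of_nonpos (by positivity) (sub_nonpos.2 hbound)
  · rw [hsum, ← mul_zero (2 ^ n : ℝ), mul_le_mul_iff_of_pos_left (by positivity), sub_nonpos]

/-- An undetected empty integer hull: for `b = 2^{-(n+1)}` and the constraints
`g_P(x) = ∑_{i∈P}(1-x_i) + ∑_{i∉P} x_i - b ≥ 0` (one for each `P ⊆ N`), with
`g_P(x_I) = |I Δ P| - b`, no 0/1 point satisfies all constraints, yet the symmetric
assignment `y_I^N = 2^{-n}` satisfies the level-`(n-1)` feasibility conditions for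
every constraint. -/
theorem undetected_empty_integer_hull (n : ℕ) (hn : 1 ≤ n)
    (b : ℝ) (hb : b = 1 / 2 ^ (n + 1))
    (Y : Finset (Fin n) → ℝ) (hY : ∀ I : Finset (Fin n), Y I = 1 / 2 ^ n) :
    (¬ ∃ I : Finset (Fin n), ∀ P : Finset (Fin n),
        0 ≤ ((((I \ P) ∪ (P \ I)).card : ℝ) - b)) ∧
    (∀ P : Finset (Fin n),
      (((((P \ P) ∪ (P \ P)).card : ℝ) - b) * Y P < 0) ∧
      (∀ I : Finset (Fin n), I ≠ P →
        0 < ((((I \ P) ∪ (P \ I)).card : ℝ) - b) * Y I) ∧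
      (∑ I : Finset (Fin n), 1 / (((((I \ P) ∪ (P \ I)).card : ℝ) - b) * Y I) ≤ 0) ∧
      ((∑ I : Finset (Fin n), 1 / (((((I \ P) ∪ (P \ I)).card : ℝ) - b) * Y I) ≤ 0)
        ↔ (∑ I ∈ Finset.univ.filter (fun I : Finset (Fin n) => I ≠ ∅),
            1 / ((I.card : ℝ) - b)) ≤ 1 / b)) :=
  undetected_empty_integer_hull_general n b hb Y hY
end

section
/- Let f : {0,1}^n → ℝ be normalized so that min_{x∈{0,1}^n} f(x) = 0 and max_{x∈{0,1}^n} f(x) = 1. If f has an integrality gap at level n−1, i.e., there exists a family of reals {y_I^N : I ⊆ N} with Σ_{I⊆N} y_I^N = 1, exactly one K ⊆ N with y_K^N < 0, y_J^N > 0 for all J ≠ K, Σ_{I⊆N} 1/y_I^N ≤ 0, and Σ_{I⊆N} y_I^N f(x_I) < 0, then f, viewed as a multilinear polynomial, has degree exactly n; equivalently, its top coefficient Σ_{T⊆N} (−1)^{n−|T|} f(x_T) is nonzero. -/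
open Finset

/-- If a normalized function `F : 2^N → ℝ` (with `min F = 0`, `max F = 1`) has an
integrality gap at level `n-1` (certified by a family `{y_I^N}` as in Theorem 2 of the
paper), then its multilinear representation has degree exactly `n`, i.e. its top
coefficient `∑_{T ⊆ N} (-1)^{n - |T|} F(x_T)` is nonzero. -/
theorem gap_implies_degree_n (n : ℕ) (hn : 1 ≤ n)
    (F : Finset (Fin n) → ℝ)
    (hF01 : ∀ I : Finset (Fin n), 0 ≤ F I ∧ F I ≤ 1)
    (hFmin : ∃ I : Finset (Fin n), F I = 0)
    (hFmax : ∃ I : Finset (Fin n), F I = 1)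
    (hgap : ∃ Y : Finset (Fin n) → ℝ,
      (∑ I : Finset (Fin n), Y I = 1) ∧
      (∃ K : Finset (Fin n), Y K < 0 ∧
        ∀ J : Finset (Fin n), J ≠ K → 0 < Y J) ∧
      (∑ I : Finset (Fin n), 1 / Y I ≤ 0) ∧
      (∑ I : Finset (Fin n), Y I * F I) < 0) :
    (∑ T : Finset (Fin n), (-1 : ℝ) ^ (n - T.card) * F T) ≠ 0 := by
  intro hc
  obtain ⟨Y, hsum1, ⟨K, hK, hpos⟩, hinv, hval⟩ := hgap
  have hKmem : K ∈ (univ : Finset (Finset (Fin n))) := mem_univ K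
  have hpos' : ∀ J ∈ univ.erase K, 0 < Y J := fun J hJ => hpos J (mem_erase.mp hJ).1
  have hy0 : 0 < -Y K := by linarith
  -- split sums at K
  have hsplit : ∀ g : Finset (Fin n) → ℝ,
      (∑ I : Finset (Fin n), g I) = g K + ∑ I ∈ univ.erase K, g I :=
    fun g => (Finset.add_sum_erase univ g hKmem).symm
  -- Step 1 : for every J ≠ K we have -Y K ≤ Y J
  have hinv' : (1 / Y K) + ∑ J ∈ univ.erase K, 1 / Y J ≤ 0 := by
    rw [← hsplit (fun I => 1 / Y I)]; exact hinv
  have hSle : ∑ J ∈ univ.erase K, 1 / Y J ≤ 1 / (-Y K) := by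
    have : (1 : ℝ) / Y K = -(1 / (-Y K)) := by
      field_simp
    linarith [hinv', this ▸ hinv']
  have hYge : ∀ J ∈ univ.erase K, -Y K ≤ Y J := by
    intro J hJ
    have h1 : 1 / Y J ≤ ∑ J' ∈ univ.erase K, 1 / Y J' := by
      apply Finset.single_le_sum (f := fun J' => 1 / Y J') _ hJ
      intro i hi
      exact le_of_lt (one_div_pos.mpr (hpos' i hi))
    have h2 : 1 / Y J ≤ 1 / (-Y K) := le_trans h1 hSle
    exact le_of_one_div_le_one_div (hpos' J hJ) h2
  -- Step 2 : F K ≤ ∑_{T ≠ K} F T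
  have hcK : (-1 : ℝ) ^ (n - K.card) * F K
      = -∑ T ∈ univ.erase K, (-1 : ℝ) ^ (n - T.card) * F T := by
    have := hsplit (fun T => (-1 : ℝ) ^ (n - T.card) * F T)
    rw [hc] at this
    linarith
  have hFKle : F K ≤ ∑ T ∈ univ.erase K, F T := by
    have h1 : F K = |(-1 : ℝ) ^ (n - K.card) * F K| := by
      rw [abs_mul, abs_pow, abs_neg, abs_one, one_pow, one_mul,
        abs_of_nonneg (hF01 K).1]
    rw [h1, hcK, abs_neg]
    calc |∑ T ∈ univ.erase K, (-1 : ℝ) ^ (n - T.card) * F T|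
        ≤ ∑ T ∈ univ.erase K, |(-1 : ℝ) ^ (n - T.card) * F T| :=
          Finset.abs_sum_le_sum_abs _ _
      _ = ∑ T ∈ univ.erase K, F T := by
          apply Finset.sum_congr rfl
          intro T _
          rw [abs_mul, abs_pow, abs_neg, abs_one, one_pow, one_mul,
            abs_of_nonneg (hF01 T).1]
  -- Step 3 : conclude ∑ Y I * F I ≥ 0, contradiction
  have hval' : Y K * F K + ∑ J ∈ univ.erase K, Y J * F J < 0 := by
    rw [← hsplit (fun I => Y I * F I)]; exact hval
  have hterm : ∑ J ∈ univ.erase K, (-Y K) * F J ≤ ∑ J ∈ univ.erase K, Y J * F J := by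
    apply Finset.sum_le_sum
    intro J hJ
    exact mul_le_mul_of_nonneg_right (hYge J hJ) (hF01 J).1
  have hsum' : ∑ J ∈ univ.erase K, (-Y K) * F J = (-Y K) * ∑ J ∈ univ.erase K, F J := by
    rw [Finset.mul_sum]
  have h4 : (-Y K) * F K ≤ (-Y K) * ∑ J ∈ univ.erase K, F J :=
    mul_le_mul_of_nonneg_left hFKle (le_of_lt hy0)
  have hterm' : (-Y K) * ∑ J ∈ univ.erase K, F J ≤ ∑ J ∈ univ.erase K, Y J * F J :=
    hsum' ▸ hterm
  linarith
end

section
/- Let f : {0,1}^n → ℝ be such that f(x_{I₁}) = 1 for some I₁ ⊆ N, 0 ≤ f(x) ≤ 1 for every x ∈ {0,1}^n, and Σ_{I⊆N} f(x_I) ≥ 2. Then f has no integrality gap at level n−1: there is no family of reals {y_I^N : I ⊆ N} with Σ_{I⊆N} y_I^N = 1, exactly one K ⊆ N with y_K^N < 0, y_J^N > 0 for all J ≠ K, Σ_{I⊆N} 1/y_I^N ≤ 0, and Σ_{I⊆N} y_I^N f(x_I) < 0. -/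
open Finset

/-- If `F : 2^N → ℝ` attains the value `1`, takes values in `[0,1]`, and
`∑_{I ⊆ N} F(x_I) ≥ 2`, then `F` has no integrality gap at level `n-1`: there is no
family `{y_I^N}` satisfying the gap conditions of Theorem 2 of the paper. -/
theorem sum_ge_two_implies_no_gap (n : ℕ) (hn : 1 ≤ n)
    (F : Finset (Fin n) → ℝ)
    (I₁ : Finset (Fin n)) (hI₁ : F I₁ = 1)
    (hF01 : ∀ I : Finset (Fin n), 0 ≤ F I ∧ F I ≤ 1)
    (hFsum : 2 ≤ ∑ I : Finset (Fin n), F I) :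
    ¬ ∃ Y : Finset (Fin n) → ℝ,
      (∑ I : Finset (Fin n), Y I = 1) ∧
      (∃ K : Finset (Fin n), Y K < 0 ∧
        ∀ J : Finset (Fin n), J ≠ K → 0 < Y J) ∧
      (∑ I : Finset (Fin n), 1 / Y I ≤ 0) ∧
      (∑ I : Finset (Fin n), Y I * F I) < 0 := by
  rintro ⟨Y, hsum, ⟨K, hK, hpos⟩, hrec, hneg⟩
  set S : Finset (Finset (Fin n)) := Finset.univ.erase K with hS
  -- S is nonempty
  have hcard : 1 < Fintype.card (Finset (Fin n)) := by
    rw [Fintype.card_finset, Fintype.card_fin]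
    calc 1 < 2 ^ 1 := by norm_num
    _ ≤ 2 ^ n := Nat.pow_le_pow_right (by norm_num) hn
  obtain ⟨J, hJK⟩ := Fintype.exists_ne_of_one_lt_card hcard K
  have hSne : S.Nonempty := ⟨J, Finset.mem_erase.2 ⟨hJK, Finset.mem_univ J⟩⟩
  obtain ⟨J₀, hJ₀S, hmin⟩ := S.exists_min_image Y hSne
  have hJ₀K : J₀ ≠ K := (Finset.mem_erase.1 hJ₀S).1
  have hJ₀pos : 0 < Y J₀ := hpos J₀ hJ₀K
  -- split reciprocal sum
  have hsplit1 : (1 : ℝ) / Y K + ∑ J ∈ S, 1 / Y J = ∑ I : Finset (Fin n), 1 / Y I :=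
    Finset.add_sum_erase _ (fun I => 1 / Y I) (Finset.mem_univ K)
  have hone : (1 : ℝ) / Y J₀ ≤ ∑ J ∈ S, 1 / Y J :=
    Finset.single_le_sum (f := fun J => 1 / Y J) (fun J hJ => by
      have := hpos J (Finset.mem_erase.1 hJ).1
      positivity) hJ₀S
  have hrec2 : 1 / Y J₀ + 1 / Y K ≤ 0 := by linarith
  -- deduce -Y K ≤ Y J₀
  have hdom : -Y K ≤ Y J₀ := by
    have h1 : 1 / Y J₀ ≤ 1 / (-Y K) := by
      rw [div_neg]; linarith
    exact le_of_one_div_le_one_div hJ₀pos h1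
  -- split F sum
  have hFsplit : F K + ∑ J ∈ S, F J = ∑ I : Finset (Fin n), F I :=
    Finset.add_sum_erase _ F (Finset.mem_univ K)
  have hF1 : (1 : ℝ) ≤ ∑ J ∈ S, F J := by
    have := (hF01 K).2
    linarith
  -- lower bound on the partial objective sum
  have hterm : ∀ J ∈ S, Y J₀ * F J ≤ Y J * F J := fun J hJ =>
    mul_le_mul_of_nonneg_right (hmin J hJ) (hF01 J).1
  have hlow : Y J₀ * ∑ J ∈ S, F J ≤ ∑ J ∈ S, Y J * F J := by
    rw [Finset.mul_sum]
    exact Finset.sum_le_sum hterm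
  have hlow2 : Y J₀ ≤ Y J₀ * ∑ J ∈ S, F J := by
    nlinarith
  -- split objective sum
  have hOsplit : Y K * F K + ∑ J ∈ S, Y J * F J = ∑ I : Finset (Fin n), Y I * F I :=
    Finset.add_sum_erase _ (fun I => Y I * F I) (Finset.mem_univ K)
  have hKterm : Y K ≤ Y K * F K := by
    nlinarith [(hF01 K).2, hK.le]
  linarith
end

section
/- Let I₁ ≠ I₂ be two subsets of N and let f : {0,1}^n → {0,1} be the function with f(x_{I₁}) = f(x_{I₂}) = 1 and f(x_I) = 0 for every other I ⊆ N. Then f has no integrality gap at level n−1: there is no family of reals {y_I^N : I ⊆ N} with Σ_{I⊆N} y_I^N = 1, exactly one K ⊆ N with y_K^N < 0, y_J^N > 0 for all J ≠ K, Σ_{I⊆N} 1/y_I^N ≤ 0, and y_{I₁}^N + y_{I₂}^N < 0. -/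
open Finset

lemma aux_neg_le (n : ℕ) (Y : Finset (Fin n) → ℝ) (K : Finset (Fin n))
    (hK : Y K < 0) (hpos : ∀ J : Finset (Fin n), J ≠ K → 0 < Y J)
    (hrec : ∑ I : Finset (Fin n), 1 / Y I ≤ 0)
    (J : Finset (Fin n)) (hJ : J ≠ K) : -Y K ≤ Y J := by
  have hsplit : ∑ I : Finset (Fin n), 1 / Y I
      = 1 / Y K + ∑ I ∈ univ.erase K, 1 / Y I := by
    exact (Finset.add_sum_erase univ (fun I => 1 / Y I) (mem_univ K)).symm
  have hJin : J ∈ univ.erase K := Finset.mem_erase.2 ⟨hJ, mem_univ J⟩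
  have hle : 1 / Y J ≤ ∑ I ∈ univ.erase K, 1 / Y I := by
    refine Finset.single_le_sum (f := fun I => 1 / Y I) (fun i hi => ?_) hJin
    have := hpos i (Finset.mem_erase.1 hi).1
    positivity
  have h1 : 1 / Y J ≤ 1 / (-Y K) := by
    rw [hsplit] at hrec
    rw [one_div_neg_eq_neg_one_div]
    linarith
  have hYJ : 0 < Y J := hpos J hJ
  rw [div_le_div_iff₀ hYJ (neg_pos.2 hK)] at h1
  linarith


/-- The 0/1-valued function taking value `1` exactly on the two points `x_{I₁}` and
`x_{I₂}` has no integrality gap at level `n-1`: there is no family `{y_I^N}` satisfying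
the gap conditions of Theorem 2 of the paper (for this `F` the objective value is
`y_{I₁}^N + y_{I₂}^N`). -/
theorem two_point_function_no_gap (n : ℕ) (hn : 1 ≤ n)
    (I₁ I₂ : Finset (Fin n)) (hI : I₁ ≠ I₂)
    (F : Finset (Fin n) → ℝ)
    (hF : ∀ I : Finset (Fin n), F I = if I = I₁ ∨ I = I₂ then 1 else 0) :
    ¬ ∃ Y : Finset (Fin n) → ℝ,
      (∑ I : Finset (Fin n), Y I = 1) ∧
      (∃ K : Finset (Fin n), Y K < 0 ∧
        ∀ J : Finset (Fin n), J ≠ K → 0 < Y J) ∧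
      (∑ I : Finset (Fin n), 1 / Y I ≤ 0) ∧
      Y I₁ + Y I₂ < 0 := by
  rintro ⟨Y, hsum, ⟨K, hK, hpos⟩, hrec, hobj⟩
  by_cases h1 : I₁ = K
  · have h2 : I₂ ≠ K := fun h => hI (h1.trans h.symm)
    have := aux_neg_le n Y K hK hpos hrec I₂ h2
    rw [h1] at hobj; linarith
  · by_cases h2 : I₂ = K
    · have := aux_neg_le n Y K hK hpos hrec I₁ h1
      rw [h2] at hobj; linarith
    · have := hpos I₁ h1
      have := hpos I₂ h2
      linarith
end

section
/- Let n ≥ 1 and let f : {0,1}^n → ℝ be the function with f(x_∅) = 1 (the all-zeros point) and f(x_I) = 0 for every nonempty I ⊆ N; equivalently f(x) = 1 − Σ_{∅≠I⊆N} (−1)^{|I|} Π_{i∈I} x_i as a multilinear polynomial. Then f has an integrality gap at level n−1: there exists a family of reals {y_I^N : I ⊆ N} with Σ_{I⊆N} y_I^N = 1, y_∅^N < 0, y_J^N > 0 for all nonempty J ⊆ N, Σ_{I⊆N} 1/y_I^N ≤ 0, and Σ_{I⊆N} y_I^N f(x_I) = y_∅^N < 0. -/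
/-! Only the values of `Y` on `∅` and on the `m = 2ⁿ - 1` nonempty sets matter, so take the
two-valued family `Y ∅ = -1/m²`, `Y J = (m² + 1)/m³`: it sums to `1`, its reciprocals sum to
`-m²/(m² + 1) < 0`, and against the indicator of `∅` it picks out `Y ∅`. -/

open Finset

lemma sum_update_const {ι R : Type*} [Fintype ι] [DecidableEq ι] [NonAssocSemiring R] (i₀ : ι)
    (a c : R) :
    ∑ i, Function.update (fun _ => c) i₀ a i = a + (Fintype.card ι - 1 : ℕ) * c := by
  rw [sum_update_of_mem (mem_univ i₀), sum_const, card_univ_sdiff, card_singleton, nsmul_eq_mul]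

theorem two_value_weights_sum_and_inv_sum {m : ℝ} (hm : 0 < m) :
    -1 / m ^ 2 + m * ((m ^ 2 + 1) / m ^ 3) = 1 ∧
      1 / (-1 / m ^ 2) + m * (1 / ((m ^ 2 + 1) / m ^ 3)) = -m ^ 2 / (m ^ 2 + 1) := by
  constructor <;> field_simp <;> ring

theorem exists_sum_eq_one_sum_one_div_nonpos {ι : Type*} [Fintype ι] [Nontrivial ι] (i₀ : ι) :
    ∃ Y : ι → ℝ, ∑ i, Y i = 1 ∧ Y i₀ < 0 ∧ (∀ j, j ≠ i₀ → 0 < Y j) ∧ ∑ i, 1 / Y i ≤ 0 := by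
  classical
  set m : ℝ := ((Fintype.card ι - 1 : ℕ) : ℝ)
  have hm : 0 < m := Nat.cast_pos.mpr (Nat.sub_pos_of_lt Fintype.one_lt_card)
  obtain ⟨hsum, hinv⟩ := two_value_weights_sum_and_inv_sum hm
  refine ⟨Function.update (fun _ => (m ^ 2 + 1) / m ^ 3) i₀ (-1 / m ^ 2), ?_, ?_, ?_, ?_⟩
  · rw [sum_update_const]; exact hsum
  · rw [Function.update_self]; exact div_neg_of_neg_of_pos (by norm_num) (by positivity)
  · intro j hj; rw [Function.update_of_ne hj]; positivity
  · rw [sum_congr rfl fun i _ => Function.apply_update (fun _ y => 1 / y) _ i₀ _ i,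
      sum_update_const, hinv]
    exact div_nonpos_of_nonpos_of_nonneg (by nlinarith) (by positivity)

/-- The indicator of the all-zeros point (the multilinear polynomial
`f(x) = 1 - ∑_{∅ ≠ I ⊆ N} (-1)^{|I|} ∏_{i∈I} x_i`) has an integrality gap at level
`n-1`: there is a family `{y_I^N}` satisfying the gap conditions of Theorem 2 of the
paper, with objective value `y_∅^N < 0`. -/
theorem indicator_of_zero_has_gap (n : ℕ) (hn : 1 ≤ n)
    (F : Finset (Fin n) → ℝ)
    (hF : ∀ I : Finset (Fin n), F I = if I = ∅ then 1 else 0) :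
    ∃ Y : Finset (Fin n) → ℝ,
      (∑ I : Finset (Fin n), Y I = 1) ∧
      Y ∅ < 0 ∧
      (∀ J : Finset (Fin n), J ≠ ∅ → 0 < Y J) ∧
      (∑ I : Finset (Fin n), 1 / Y I ≤ 0) ∧
      (∑ I : Finset (Fin n), Y I * F I) = Y ∅ ∧
      (∑ I : Finset (Fin n), Y I * F I) < 0 := by
  have : Nonempty (Fin n) := ⟨⟨0, hn⟩⟩
  obtain ⟨Y, hsum, hneg, hpos, hinv⟩ := exists_sum_eq_one_sum_one_div_nonpos (∅ : Finset (Fin n))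
  have hobj : ∑ I, Y I * F I = Y ∅ := by
    simp only [hF, mul_ite, mul_one, mul_zero, sum_ite_eq', mem_univ, if_true]
  exact ⟨Y, hsum, hneg, hpos, hinv, hobj, hobj ▸ hneg⟩
end

section
/- Let n ≥ 1 and let w : P(N) → ℝ be any real vector indexed by subsets of N = {1,...,n}. Then the full moment matrix M_n(w), indexed by all subsets I, J ⊆ N with (I,J)-entry w_{I∪J}, is congruent to the diagonal matrix D_n(w) indexed by all subsets of N whose (I,I)-entry is w_I^N. In particular, M_n(w) is positive semidefinite if and only if w_I^N ≥ 0 for all I ⊆ N. -/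
open Finset Matrix

lemma alt_sum {α : Type*} [DecidableEq α] (s : Finset α) :
    ∑ H ∈ s.powerset, (-1 : ℝ) ^ H.card = if s = ∅ then 1 else 0 := by
  have := @Finset.sum_powerset_neg_one_pow_card α _ s
  have h2 : ((∑ m ∈ s.powerset, (-1 : ℤ) ^ m.card : ℤ) : ℝ)
      = ∑ H ∈ s.powerset, (-1 : ℝ) ^ H.card := by push_cast; ring_nf
  rw [← h2, this]
  split <;> simp

lemma mob_inv {n : ℕ} (w : Finset (Fin n) → ℝ) (S : Finset (Fin n)) :
    ∑ K ∈ Finset.univ.filter (fun K => S ⊆ K), mob w K = w S := by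
  unfold mob
  rw [Finset.sum_sigma']
  have h2 : ∑ T ∈ Finset.univ.filter (fun T => S ⊆ T),
      ∑ H ∈ (T \ S).powerset, (-1:ℝ)^H.card * w T = w S := by
    have : ∀ T ∈ Finset.univ.filter (fun T => S ⊆ T),
        ∑ H ∈ (T \ S).powerset, (-1:ℝ)^H.card * w T
          = (if T = S then 1 else 0) * w T := by
      intro T hT
      simp only [mem_filter, mem_univ, true_and] at hT
      rw [← Finset.sum_mul, alt_sum]
      congr 1
      rcases eq_or_ne T S with h | h
      · simp [h]
      · rw [if_neg h, if_neg]
        simp only [Ne, sdiff_eq_empty_iff_subset]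
        exact fun hTS => h (Finset.Subset.antisymm hTS hT)
    rw [Finset.sum_congr rfl this]
    rw [Finset.sum_eq_single S] <;> simp +contextual
  rw [← h2, Finset.sum_sigma']
  refine Finset.sum_nbij' (fun x => ⟨x.2 ∪ x.1, x.2⟩) (fun x => ⟨x.1 \ x.2, x.2⟩)
    ?_ ?_ ?_ ?_ ?_
  · rintro ⟨K, H⟩ hx
    simp only [Finset.mem_sigma, mem_filter, mem_univ, true_and, mem_powerset] at hx ⊢
    obtain ⟨hSK, hH⟩ := hx
    constructor
    · exact hSK.trans subset_union_right
    · intro a ha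
      rw [Finset.mem_sdiff]
      refine ⟨Finset.mem_union_left _ ha, fun haS => ?_⟩
      have := hH ha
      simp at this
      exact this (hSK haS)
  · rintro ⟨T, H⟩ hx
    simp only [Finset.mem_sigma, mem_filter, mem_univ, true_and, mem_powerset] at hx ⊢
    obtain ⟨hST, hH⟩ := hx
    constructor
    · intro a ha
      rw [Finset.mem_sdiff]
      exact ⟨hST ha, fun haH => (Finset.mem_sdiff.mp (hH haH)).2 ha⟩
    · intro a ha
      simp [Finset.mem_sdiff, ha]
  · rintro ⟨K, H⟩ hx
    simp only [Finset.mem_sigma, mem_filter, mem_univ, true_and, mem_powerset] at hx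
    have : H ∩ K = ∅ := by
      rw [Finset.eq_empty_iff_forall_notMem]
      intro a ha
      have := hx.2 (Finset.mem_inter.mp ha).1
      simp at this
      exact this (Finset.mem_inter.mp ha).2
    simp only [Sigma.mk.inj_iff, heq_eq_eq, and_true]
    rw [Finset.union_sdiff_cancel_left]
    exact Finset.disjoint_iff_inter_eq_empty.mpr this
  · rintro ⟨T, H⟩ hx
    simp only [Finset.mem_sigma, mem_filter, mem_univ, true_and, mem_powerset] at hx
    simp only [Sigma.mk.inj_iff, heq_eq_eq, and_true]
    exact Finset.union_sdiff_of_subset (fun a ha => (Finset.mem_sdiff.mp (hx.2 ha)).1)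
  · rintro ⟨K, H⟩ hx
    simp

example : True := trivial

def zet (n : ℕ) : Matrix (Finset (Fin n)) (Finset (Fin n)) ℝ :=
  Matrix.of fun K J => if J ⊆ K then (1:ℝ) else 0

def muM (n : ℕ) : Matrix (Finset (Fin n)) (Finset (Fin n)) ℝ :=
  Matrix.of fun K J => if J ⊆ K then (-1:ℝ)^(K \ J).card else 0

lemma zet_mul_mu (n : ℕ) : zet n * muM n = 1 := by
  ext K L
  simp only [Matrix.mul_apply, zet, muM, Matrix.of_apply, Matrix.one_apply, ite_mul, one_mul,
    zero_mul]
  by_cases hLK : L ⊆ K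
  · have : ∑ J : Finset (Fin n), (if J ⊆ K then if L ⊆ J then (-1:ℝ)^(J \ L).card else 0 else 0)
        = ∑ J ∈ Finset.univ.filter (fun J => L ⊆ J ∧ J ⊆ K), (-1:ℝ)^(J \ L).card := by
      rw [Finset.sum_filter]
      refine Finset.sum_congr rfl fun J _ => ?_
      by_cases h1 : J ⊆ K <;> by_cases h2 : L ⊆ J <;> simp [h1, h2]
    rw [this]
    have h2 : ∑ J ∈ Finset.univ.filter (fun J => L ⊆ J ∧ J ⊆ K), (-1:ℝ)^(J \ L).card
        = ∑ H ∈ (K \ L).powerset, (-1:ℝ)^H.card := by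
      refine Finset.sum_nbij' (fun J => J \ L) (fun H => H ∪ L) ?_ ?_ ?_ ?_ ?_
      · intro J hJ
        simp only [mem_filter, mem_univ, true_and, mem_powerset] at hJ ⊢
        exact Finset.sdiff_subset_sdiff hJ.2 (Finset.Subset.refl L)
      · intro H hH
        simp only [mem_filter, mem_univ, true_and, mem_powerset] at hH ⊢
        exact ⟨Finset.subset_union_right, Finset.union_subset ((hH.trans (Finset.sdiff_subset)))
          hLK⟩
      · intro J hJ
        simp only [mem_filter, mem_univ, true_and] at hJ
        exact Finset.sdiff_union_of_subset hJ.1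
      · intro H hH
        simp only [mem_powerset] at hH
        show (H ∪ L) \ L = H
        rw [Finset.union_sdiff_right, Finset.sdiff_eq_self_of_disjoint]
        exact Finset.disjoint_left.mpr fun a haH haL =>
          (Finset.mem_sdiff.mp (hH haH)).2 haL
      · intro J hJ
        rfl
    rw [h2, alt_sum]
    by_cases h : K = L
    · simp [h]
    · rw [if_neg h, if_neg]
      simp only [Ne, sdiff_eq_empty_iff_subset]
      exact fun hKL => h (Finset.Subset.antisymm hKL hLK)
  · rw [if_neg fun h => hLK (by simp [h])]
    refine Finset.sum_eq_zero fun J hJ => ?_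
    by_cases h1 : J ⊆ K
    · by_cases h2 : L ⊆ J
      · exact absurd (h2.trans h1) hLK
      · simp [h1, h2]
    · simp [h1]

/-- The full moment matrix `M_n(w)` is congruent to the diagonal matrix `D_n(w)` with
entries `w_I^N`; in particular `M_n(w)` is PSD iff all `w_I^N` are nonnegative. -/
theorem full_moment_congruent_diagonal (n : ℕ) (hn : 1 ≤ n)
    (w : Finset (Fin n) → ℝ) :
    (∃ P : Matrix (Finset (Fin n)) (Finset (Fin n)) ℝ, IsUnit P ∧
        Mfull w = Pᵀ * Matrix.diagonal (fun I : Finset (Fin n) => mob w I) * P) ∧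
      ((Mfull w).PosSemidef ↔ ∀ I : Finset (Fin n), 0 ≤ mob w I) := by
  set P := zet n with hPdef
  set Q := muM n with hQdef
  have hPQ : P * Q = 1 := zet_mul_mu n
  have hQP : Q * P = 1 := mul_eq_one_comm.mp hPQ
  set D := Matrix.diagonal (fun I : Finset (Fin n) => mob w I) with hDdef
  have key : Mfull w = Pᵀ * D * P := by
    ext I J
    simp only [Mfull, Matrix.of_apply, Matrix.mul_apply, Matrix.mul_diagonal,
      Matrix.transpose_apply, hPdef, zet, hDdef]
    rw [← mob_inv w (I ∪ J), Finset.sum_filter]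
    refine Finset.sum_congr rfl fun K _ => ?_
    have hin : ∑ x : Finset (Fin n),
        (if I ⊆ x then Matrix.diagonal (fun I => mob w I) x K else 0)
        = if I ⊆ K then mob w K else 0 := by
      rw [Finset.sum_eq_single K]
      · simp [Matrix.diagonal_apply]
      · intro b _ hb
        simp [Matrix.diagonal_apply, hb]
      · simp
    by_cases h1 : I ⊆ K <;> by_cases h2 : J ⊆ K <;>
      simp [h1, h2, Finset.union_subset_iff, hin]
  have hDconj : D = Qᵀ * Mfull w * Q := by
    rw [key]
    have : Qᵀ * (Pᵀ * D * P) * Q = (Qᵀ * Pᵀ) * D * (P * Q) := by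
      simp only [Matrix.mul_assoc]
    rw [this, ← Matrix.transpose_mul, hPQ, Matrix.transpose_one, Matrix.one_mul,
      Matrix.mul_one]
  refine ⟨⟨P, ⟨⟨P, Q, hPQ, hQP⟩, rfl⟩, key⟩, ?_, ?_⟩
  · intro hpsd I
    have hD : D.PosSemidef := by
      rw [hDconj, ← Matrix.conjTranspose_eq_transpose_of_trivial]
      exact hpsd.conjTranspose_mul_mul_same Q
    exact Matrix.posSemidef_diagonal_iff.mp hD I
  · intro h
    have hD : D.PosSemidef := Matrix.posSemidef_diagonal_iff.mpr h
    rw [key, ← Matrix.conjTranspose_eq_transpose_of_trivial]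
    exact hD.conjTranspose_mul_mul_same P
end

section
/- Let n ≥ 1, let g(x) = Σ_{i=1}^n a_i x_i + b be an affine-linear function, let y : P(N) → ℝ, and let z = g∗y be the shifted vector defined by z_I = Σ_{i=1}^n a_i y_{I∪{i}} + b · y_I for every I ⊆ N. Then for every I ⊆ N, z_I^N = g(x_I) · y_I^N, where g(x_I) = Σ_{i∈I} a_i + b. -/
open Finset

lemma key_cancel {n : ℕ} (y : Finset (Fin n) → ℝ) (I : Finset (Fin n))
    (i : Fin n) (hi : i ∉ I) :
    ∑ H ∈ (Finset.univ \ I).powerset, (-1 : ℝ) ^ H.card * y (insert i (H ∪ I)) = 0 := by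
  apply Finset.sum_involution (g := fun H _ => if i ∈ H then H.erase i else insert i H)
  · intro H hH
    by_cases hiH : i ∈ H
    · simp only [hiH, if_true]
      have hcard : (H.erase i).card + 1 = H.card := Finset.card_erase_add_one hiH
      have hset : insert i (H.erase i ∪ I) = insert i (H ∪ I) := by
        ext x
        simp only [Finset.mem_insert, Finset.mem_union, Finset.mem_erase]
        tauto
      rw [hset, ← hcard, pow_succ]
      ring
    · simp only [hiH, if_false]
      have hcard : (insert i H).card = H.card + 1 := Finset.card_insert_of_notMem hiH
      have hset : insert i (insert i H ∪ I) = insert i (H ∪ I) := by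
        ext x
        simp only [Finset.mem_insert, Finset.mem_union]
        tauto
      rw [hset, hcard, pow_succ]
      ring
  · intro H hH _
    by_cases hiH : i ∈ H
    · simp only [hiH, if_true]
      exact fun h => Finset.notMem_erase i H (h.symm ▸ hiH)
    · simp only [hiH, if_false]
      exact fun h => hiH (h ▸ Finset.mem_insert_self i H)
  · intro H hH
    by_cases hiH : i ∈ H <;> simp [hiH, Finset.insert_erase, Finset.erase_insert]
  · intro H hH
    simp only [Finset.mem_powerset] at hH ⊢
    by_cases hiH : i ∈ H <;> simp only [hiH, if_true, if_false]
    · exact (Finset.erase_subset _ _).trans hH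
    · exact Finset.insert_subset (by simp [hi]) hH

/-- For an affine-linear `g(x) = ∑ i, a i * x i + b` and the shifted vector `z = g∗y`,
one has `z_I^N = g(x_I) · y_I^N` where `g(x_I) = ∑_{i∈I} a i + b`. -/
theorem mob_shift_eq (n : ℕ) (hn : 1 ≤ n)
    (a : Fin n → ℝ) (b : ℝ) (y : Finset (Fin n) → ℝ) (I : Finset (Fin n)) :
    mob (shiftVec a b y) I = ((∑ i ∈ I, a i) + b) * mob y I := by
  unfold mob shiftVec
  simp only [mul_add, Finset.mul_sum, Finset.sum_add_distrib]
  rw [Finset.sum_comm]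
  rw [← Finset.sum_sdiff (Finset.subset_univ I)]
  have h1 : ∑ i ∈ Finset.univ \ I, ∑ H ∈ (Finset.univ \ I).powerset,
      (-1 : ℝ) ^ H.card * (a i * y (insert i (H ∪ I))) = 0 := by
    apply Finset.sum_eq_zero
    intro i hi
    have hiI : i ∉ I := (Finset.mem_sdiff.1 hi).2
    have := key_cancel y I i hiI
    calc ∑ H ∈ (Finset.univ \ I).powerset, (-1 : ℝ) ^ H.card * (a i * y (insert i (H ∪ I)))
        = a i * ∑ H ∈ (Finset.univ \ I).powerset, (-1 : ℝ) ^ H.card * y (insert i (H ∪ I)) := by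
          rw [Finset.mul_sum]; congr 1; ext H; ring
      _ = 0 := by rw [this, mul_zero]
  have h2 : ∑ i ∈ I, ∑ H ∈ (Finset.univ \ I).powerset,
      (-1 : ℝ) ^ H.card * (a i * y (insert i (H ∪ I))) =
      (∑ i ∈ I, a i) * ∑ H ∈ (Finset.univ \ I).powerset, (-1 : ℝ) ^ H.card * y (H ∪ I) := by
    rw [Finset.sum_mul]
    apply Finset.sum_congr rfl
    intro i hi
    rw [Finset.mul_sum]
    apply Finset.sum_congr rfl
    intro H hH
    rw [Finset.insert_eq_self.2 (Finset.mem_union_right H hi)]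
    ring
  rw [h1, h2]
  have h3 : ∑ H ∈ (Finset.univ \ I).powerset, (-1 : ℝ) ^ H.card * (b * y (H ∪ I)) =
      b * ∑ H ∈ (Finset.univ \ I).powerset, (-1 : ℝ) ^ H.card * y (H ∪ I) := by
    rw [Finset.mul_sum]; apply Finset.sum_congr rfl; intros; ring
  rw [h3]
  simp only [← Finset.mul_sum]
  ring
end
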